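/- arXiv:1706.05889 — 8 statements merged into one kernel-verified Lean document; each statement's English description precedes it below -/
import Mathlib

section
/- Let N, M ≥ 1 and let 𝒬 ⊆ ℝ^{N×M} be a nonempty compact convex set, each element of which is row-stochastic with strictly positive entries. Then sup_{p ∈ Δ_N} inf_{Q ∈ 𝒬} I(p,Q) equals the supremum of Σ_{n=1}^N λ_n − δ*(V|𝒬) over all triples (p, λ, V) ∈ Δ_N × ℝ^N × ℝ^{N×M} satisfying, for every m ∈ {1,…,M}, Σ_{n=1}^N φ(p_n, λ_n − V_{nm}) ≤ 1 (where φ is the exponential perspective function). -/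
open Real
open scoped ENNReal

/-- Average mutual information `I(p,Q)`. -/
noncomputable def AMI {N M : ℕ} (p : Fin N → ℝ) (Q : Fin N → Fin M → ℝ) : ℝ :=
  ∑ n, ∑ m, p n * Q n m * Real.log (Q n m / ∑ l, p l * Q l m)

/-- `Q` is row-stochastic with strictly positive entries. -/
def rowStochPos {N M : ℕ} (Q : Fin N → Fin M → ℝ) : Prop :=
  (∀ n m, 0 < Q n m) ∧ ∀ n, ∑ m, Q n m = 1

/-- Robust channel capacity `sup_{p ∈ Δ_N} inf_{Q ∈ 𝒬} I(p,Q)`. -/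
noncomputable def robustCap {N M : ℕ} (𝒬 : Set (Fin N → Fin M → ℝ)) : ℝ :=
  sSup { x | ∃ p ∈ stdSimplex ℝ (Fin N), x = sInf { y | ∃ Q ∈ 𝒬, y = AMI p Q } }

/-- Support function `δ*(V|𝒬)`. -/
noncomputable def suppFn {N M : ℕ} (𝒬 : Set (Fin N → Fin M → ℝ))
    (V : Fin N → Fin M → ℝ) : ℝ :=
  sSup { x | ∃ Q ∈ 𝒬, x = ∑ n, ∑ m, V n m * Q n m }

/-- Exponential perspective function `φ(p,t)`, with values in `[0,∞]`:
`φ(p,t) = p·exp(t/p)` for `p > 0`, `φ(0,t) = 0` for `t ≤ 0`, `φ(0,t) = ∞` for `t > 0`. -/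
noncomputable def persp (p t : ℝ) : ℝ≥0∞ :=
  if 0 < p then ENNReal.ofReal (p * Real.exp (t / p))
  else if t ≤ 0 then 0 else ⊤

/-!
Weak duality is a pointwise Fenchel–Young inequality: for `p > 0`, `log x ≤ x - 1` at
`x = r exp(t/p) / q` gives `q t - p q log (q/r) ≤ r φ(p,t) - p q`. Summing over the entries of a
channel `Q` with output distribution `r = pQ`, the constraint turns this into
`∑ λ - ⟨V, Q⟩ ≤ I(p,Q)`.

Conversely, for fixed `p` let `Q⋆` minimise the continuous function `I(p,·)` on the compact set `𝒬`.
The pair `λ = 0`, `V_{nm} = -p_n log (Q⋆_{nm} / r⋆_m)` is feasible with equality, and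
`⟨V, Q⋆⟩ = -I(p,Q⋆)`. Since `-V` is the gradient of `I(p,·)` at `Q⋆` (the terms from
differentiating `r` cancel), the first-order optimality condition of `Q⋆` on the convex set `𝒬` says
that `Q⋆` maximises `⟨V, ·⟩` on `𝒬`, so `δ*(V|𝒬) = ⟨V, Q⋆⟩`.
-/

open Finset

section

variable {N M : ℕ}

def outputDist (p : Fin N → ℝ) (Q : Fin N → Fin M → ℝ) (m : Fin M) : ℝ :=
  ∑ n, p n * Q n m

theorem AMI_eq_sum_outputDist (p : Fin N → ℝ) (Q : Fin N → Fin M → ℝ) :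
    AMI p Q = ∑ n, ∑ m, p n * Q n m * log (Q n m / outputDist p Q m) :=
  rfl

theorem exists_pos_of_mem_stdSimplex {ι : Type*} [Fintype ι] {p : ι → ℝ}
    (hp : p ∈ stdSimplex ℝ ι) : ∃ i, 0 < p i := by
  obtain ⟨i, -, hi⟩ := exists_lt_of_sum_lt (s := univ) (f := 0) (g := p) (by simp [hp.2])
  exact ⟨i, hi⟩

theorem outputDist_pos {p : Fin N → ℝ} (hp : p ∈ stdSimplex ℝ (Fin N))
    {Q : Fin N → Fin M → ℝ} (hQ : ∀ n m, 0 < Q n m) (m : Fin M) : 0 < outputDist p Q m := by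
  obtain ⟨n, hn⟩ := exists_pos_of_mem_stdSimplex hp
  exact sum_pos' (fun l _ => mul_nonneg (hp.1 l) (hQ l m).le) ⟨n, mem_univ n, mul_pos hn (hQ n m)⟩

theorem sum_outputDist {p : Fin N → ℝ} (hp : ∑ n, p n = 1)
    {Q : Fin N → Fin M → ℝ} (hQ : ∀ n, ∑ m, Q n m = 1) : ∑ m, outputDist p Q m = 1 := by
  simp_rw [outputDist, sum_comm (γ := Fin M), ← mul_sum, hQ, mul_one, hp]

theorem persp_mul_log {p x : ℝ} (hp : 0 ≤ p) (hx : 0 < x) :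
    persp p (p * log x) = ENNReal.ofReal (p * x) := by
  rcases hp.lt_or_eq with hp | rfl
  · rw [persp, if_pos hp, mul_div_cancel_left₀ _ hp.ne', exp_log hx]
  · simp [persp]

theorem mul_sub_mul_log_le_mul_persp {p q r t : ℝ} (hp : 0 ≤ p) (hq : 0 < q) (hr : 0 < r)
    (ht : persp p t ≠ ⊤) : q * t - p * q * log (q / r) ≤ r * (persp p t).toReal - p * q := by
  rcases hp.lt_or_eq with hp | rfl
  · have hlog := log_le_sub_one_of_pos (x := r * exp (t / p) / q) (by positivity)
    rw [log_div (by positivity) hq.ne', log_mul hr.ne' (exp_pos _).ne', log_exp] at hlog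
    rw [persp, if_pos hp, ENNReal.toReal_ofReal (by positivity), log_div hq.ne' hr.ne']
    have := mul_le_mul_of_nonneg_left hlog (mul_pos hp hq).le
    field_simp at this ⊢
    linarith
  · have htle : t ≤ 0 := by
      by_contra h
      simp [persp, h] at ht
    simp only [persp, lt_irrefl, if_false, if_pos htle, ENNReal.toReal_zero]
    nlinarith

theorem sum_sub_sum_mul_le_AMI {p lam : Fin N → ℝ} {V Q : Fin N → Fin M → ℝ}
    (hp : p ∈ stdSimplex ℝ (Fin N)) (hQ : rowStochPos Q)
    (hfeas : ∀ m, ∑ n, persp (p n) (lam n - V n m) ≤ 1) :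
    ∑ n, lam n - ∑ n, ∑ m, V n m * Q n m ≤ AMI p Q := by
  set φ : Fin N → Fin M → ℝ≥0∞ := fun n m => persp (p n) (lam n - V n m)
  have hφ_ne_top : ∀ n m, φ n m ≠ ⊤ := fun n m =>
    ne_top_of_le_ne_top ENNReal.one_ne_top
      ((single_le_sum (fun k _ => zero_le) (mem_univ n)).trans (hfeas m))
  have hφ_sum : ∀ m, ∑ n, (φ n m).toReal ≤ 1 := fun m => by
    rw [← ENNReal.toReal_sum fun n _ => hφ_ne_top n m]
    exact ENNReal.toReal_le_of_le_ofReal zero_le_one (by simpa using hfeas m)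
  have hr := outputDist_pos hp hQ.1
  suffices ∑ n, ∑ m, (Q n m * (lam n - V n m) - p n * Q n m * log (Q n m / outputDist p Q m))
      ≤ 0 by
    simp only [mul_sub, sum_sub_distrib, ← sum_mul, hQ.2, one_mul] at this
    rw [AMI_eq_sum_outputDist]
    simp only [mul_comm (Q _ _) (V _ _)] at this
    linarith
  calc _ ≤ ∑ n, ∑ m, (outputDist p Q m * (φ n m).toReal - p n * Q n m) :=
        sum_le_sum fun n _ => sum_le_sum fun m _ =>
          mul_sub_mul_log_le_mul_persp (hp.1 n) (hQ.1 n m) (hr m) (hφ_ne_top n m)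
    _ = ∑ m, outputDist p Q m * ∑ n, (φ n m).toReal - ∑ m, outputDist p Q m := by
        simp only [sum_sub_distrib, mul_sum]
        rw [sum_comm, sum_comm (f := fun n m => p n * Q n m)]
        rfl
    _ ≤ ∑ m, outputDist p Q m * 1 - ∑ m, outputDist p Q m := by
        gcongr with m
        exacts [(hr m).le, hφ_sum m]
    _ = 0 := by simp

theorem sum_sum_mul_sub_mul_div_outputDist_eq_zero {p : Fin N → ℝ} {Q Δ : Fin N → Fin M → ℝ}
    (hr : ∀ m, outputDist p Q m ≠ 0) :
    ∑ n, ∑ m, (p n * Δ n m - p n * Q n m * outputDist p Δ m / outputDist p Q m) = 0 := by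
  rw [sum_comm]
  refine sum_eq_zero fun m _ => ?_
  rw [sum_sub_distrib, ← sum_div, ← sum_mul]
  change outputDist p Δ m - outputDist p Q m * outputDist p Δ m / outputDist p Q m = 0
  rw [mul_div_cancel_left₀ _ (hr m), sub_self]

theorem hasDerivAt_AMI_add_smul {p : Fin N → ℝ} {Q Δ : Fin N → Fin M → ℝ}
    (hQ : ∀ n m, Q n m ≠ 0) (hr : ∀ m, outputDist p Q m ≠ 0) :
    HasDerivAt (fun t : ℝ => AMI p (Q + t • Δ))
      (∑ n, ∑ m, p n * Δ n m * log (Q n m / outputDist p Q m)) 0 := by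
  have hQt : ∀ n m, HasDerivAt (fun t : ℝ => (Q + t • Δ) n m) (Δ n m) 0 := fun n m => by
    simpa using ((hasDerivAt_id (0 : ℝ)).mul_const (Δ n m)).const_add (Q n m)
  have hrt : ∀ m, HasDerivAt (fun t : ℝ => outputDist p (Q + t • Δ) m) (outputDist p Δ m) 0 :=
    fun m => HasDerivAt.fun_sum fun n _ => (hQt n m).const_mul (p n)
  have hterm : ∀ n m, HasDerivAt
      (fun t : ℝ => p n * (Q + t • Δ) n m * log ((Q + t • Δ) n m / outputDist p (Q + t • Δ) m))
      (p n * Δ n m * log (Q n m / outputDist p Q m) +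
        (p n * Δ n m - p n * Q n m * outputDist p Δ m / outputDist p Q m)) 0 := fun n m => by
    have hlog := ((hQt n m).div (hrt m) (by simpa using hr m)).log
      (by simpa using div_ne_zero (hQ n m) (hr m))
    refine (((hQt n m).const_mul (p n)).mul hlog).congr_deriv ?_
    have := hr m
    have := hQ n m
    simp only [Pi.add_apply, Pi.smul_apply, smul_eq_mul, Pi.div_apply, zero_mul, add_zero,
      zero_smul, Pi.zero_apply, add_right_inj]
    field_simp
  refine (HasDerivAt.fun_sum fun n _ => HasDerivAt.fun_sum fun m _ => hterm n m).congr_deriv ?_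
  simp only [sum_add_distrib, sum_sum_mul_sub_mul_div_outputDist_eq_zero hr, add_zero]

theorem continuousAt_AMI {p : Fin N → ℝ} {Q : Fin N → Fin M → ℝ}
    (hQ : ∀ n m, Q n m ≠ 0) (hr : ∀ m, outputDist p Q m ≠ 0) : ContinuousAt (AMI p) Q := by
  refine tendsto_finsetSum _ fun n _ => tendsto_finsetSum _ fun m _ => ?_
  have hrm : Continuous fun Q : Fin N → Fin M → ℝ => outputDist p Q m := by
    unfold outputDist; fun_prop
  have hQnm : Continuous fun Q : Fin N → Fin M → ℝ => Q n m := by fun_prop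
  exact (continuous_const.mul hQnm).continuousAt.mul
    ((hQnm.continuousAt.div hrm.continuousAt (hr m)).log (div_ne_zero (hQ n m) (hr m)))

theorem sum_mul_log_outputDist_nonneg_of_isMinOn {p : Fin N → ℝ}
    {𝒬 : Set (Fin N → Fin M → ℝ)} {Qs Q : Fin N → Fin M → ℝ} (hconv : Convex ℝ 𝒬)
    (hmin : IsMinOn (AMI p) 𝒬 Qs) (hQs : Qs ∈ 𝒬) (hQ : Q ∈ 𝒬)
    (hQs0 : ∀ n m, Qs n m ≠ 0) (hr : ∀ m, outputDist p Qs m ≠ 0) :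
    0 ≤ ∑ n, ∑ m, p n * (Q - Qs) n m * log (Qs n m / outputDist p Qs m) := by
  have hline : IsMinOn (fun t : ℝ => AMI p (Qs + t • (Q - Qs))) (Set.Icc 0 1) 0 := fun t ht => by
    simpa using hmin (hconv.add_smul_sub_mem hQs hQ ht)
  have hdir : (1 : ℝ) ∈ posTangentConeAt (Set.Icc 0 1) 0 :=
    mem_posTangentConeAt_of_segment_subset (by simp [segment_eq_Icc])
  simpa using hline.localize.hasFDerivWithinAt_nonneg
    (hasDerivAt_AMI_add_smul hQs0 hr).hasDerivWithinAt.hasFDerivWithinAt hdir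

theorem le_suppFn {𝒬 : Set (Fin N → Fin M → ℝ)} (hcomp : IsCompact 𝒬) {Q : Fin N → Fin M → ℝ}
    (hQ : Q ∈ 𝒬) (V : Fin N → Fin M → ℝ) : ∑ n, ∑ m, V n m * Q n m ≤ suppFn 𝒬 V := by
  obtain ⟨C, hC⟩ := (hcomp.image (f := fun Q => ∑ n, ∑ m, V n m * Q n m) (by fun_prop)).bddAbove
  refine le_csSup ⟨C, ?_⟩ ⟨Q, hQ, rfl⟩
  rintro _ ⟨Q', hQ', rfl⟩
  exact hC ⟨Q', hQ', rfl⟩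

theorem sum_sub_suppFn_le_sInf_AMI {𝒬 : Set (Fin N → Fin M → ℝ)} (hne : 𝒬.Nonempty)
    (hcomp : IsCompact 𝒬) (hQ : ∀ Q ∈ 𝒬, rowStochPos Q) {p lam : Fin N → ℝ}
    {V : Fin N → Fin M → ℝ} (hp : p ∈ stdSimplex ℝ (Fin N))
    (hfeas : ∀ m, ∑ n, persp (p n) (lam n - V n m) ≤ 1) :
    ∑ n, lam n - suppFn 𝒬 V ≤ sInf { y | ∃ Q ∈ 𝒬, y = AMI p Q } := by
  obtain ⟨Q₀, hQ₀⟩ := hne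
  refine le_csInf ⟨_, Q₀, hQ₀, rfl⟩ ?_
  rintro _ ⟨Q, hQm, rfl⟩
  linarith [sum_sub_sum_mul_le_AMI hp (hQ Q hQm) hfeas, le_suppFn hcomp hQm V]

theorem exists_dual_eq_sInf_AMI {𝒬 : Set (Fin N → Fin M → ℝ)} (hne : 𝒬.Nonempty)
    (hcomp : IsCompact 𝒬) (hconv : Convex ℝ 𝒬) (hQ : ∀ Q ∈ 𝒬, rowStochPos Q)
    {p : Fin N → ℝ} (hp : p ∈ stdSimplex ℝ (Fin N)) :
    ∃ lam : Fin N → ℝ, ∃ V : Fin N → Fin M → ℝ,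
      (∀ m, ∑ n, persp (p n) (lam n - V n m) ≤ 1) ∧
      ∑ n, lam n - suppFn 𝒬 V = sInf { y | ∃ Q ∈ 𝒬, y = AMI p Q } := by
  obtain ⟨Qs, hQs, hmin⟩ := hcomp.exists_isMinOn hne fun Q hQm =>
    (continuousAt_AMI (fun n m => ((hQ Q hQm).1 n m).ne')
      fun m => (outputDist_pos hp (hQ Q hQm).1 m).ne').continuousWithinAt
  have hQs0 := (hQ Qs hQs).1
  have hr := outputDist_pos hp hQs0
  set V : Fin N → Fin M → ℝ := fun n m => -(p n * log (Qs n m / outputDist p Qs m))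
  have hVQ : ∀ Q ∈ 𝒬, ∑ n, ∑ m, V n m * Q n m ≤ ∑ n, ∑ m, V n m * Qs n m := fun Q hQm => by
    have := sum_mul_log_outputDist_nonneg_of_isMinOn hconv hmin hQs hQm
      (fun n m => (hQs0 n m).ne') fun m => (hr m).ne'
    have hgap : ∑ n, ∑ m, V n m * Qs n m - ∑ n, ∑ m, V n m * Q n m =
        ∑ n, ∑ m, p n * (Q - Qs) n m * log (Qs n m / outputDist p Qs m) := by
      simp only [V, ← sum_sub_distrib, Pi.sub_apply]
      exact sum_congr rfl fun n _ => sum_congr rfl fun m _ => by ring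
    linarith
  have hsupp : suppFn 𝒬 V = ∑ n, ∑ m, V n m * Qs n m :=
    IsGreatest.csSup_eq ⟨⟨Qs, hQs, rfl⟩, by rintro _ ⟨Q, hQm, rfl⟩; exact hVQ Q hQm⟩
  have hinf : sInf { y | ∃ Q ∈ 𝒬, y = AMI p Q } = AMI p Qs :=
    IsLeast.csInf_eq ⟨⟨Qs, hQs, rfl⟩, by rintro _ ⟨Q, hQm, rfl⟩; exact hmin hQm⟩
  refine ⟨0, V, fun m => ?_, ?_⟩
  · simp only [V, Pi.zero_apply, zero_sub, neg_neg]
    rw [sum_congr rfl fun n _ => persp_mul_log (hp.1 n) (div_pos (hQs0 n m) (hr m)),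
      ← ENNReal.ofReal_sum_of_nonneg fun n _ =>
        mul_nonneg (hp.1 n) (div_pos (hQs0 n m) (hr m)).le]
    simp only [mul_div_assoc', ← sum_div]
    rw [← outputDist, div_self (hr m).ne', ENNReal.ofReal_one]
  · rw [hsupp, hinf, AMI_eq_sum_outputDist]
    simp only [V, Pi.zero_apply, sum_const_zero, zero_sub, neg_mul, sum_neg_distrib, neg_neg]
    exact sum_congr rfl fun n _ => sum_congr rfl fun m _ => by ring

end

theorem robust_capacity_eq_convex_reformulation_general
    {N M : ℕ}
    (𝒬 : Set (Fin N → Fin M → ℝ))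
    (hne : 𝒬.Nonempty) (hcomp : IsCompact 𝒬) (hconv : Convex ℝ 𝒬)
    (hQ : ∀ Q ∈ 𝒬, rowStochPos Q) :
    robustCap 𝒬 =
      sSup { x | ∃ p ∈ stdSimplex ℝ (Fin N), ∃ lam : Fin N → ℝ,
        ∃ V : Fin N → Fin M → ℝ,
          (∀ m, ∑ n, persp (p n) (lam n - V n m) ≤ 1) ∧
          x = (∑ n, lam n) - suppFn 𝒬 V } := by
  refine csSup_eq_csSup_of_forall_exists_le ?_ ?_
  · rintro _ ⟨p, hp, rfl⟩
    obtain ⟨lam, V, hfeas, hval⟩ := exists_dual_eq_sInf_AMI hne hcomp hconv hQ hp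
    exact ⟨_, ⟨p, hp, lam, V, hfeas, rfl⟩, hval.ge⟩
  · rintro _ ⟨p, hp, lam, V, hfeas, rfl⟩
    exact ⟨_, ⟨p, hp, rfl⟩, sum_sub_suppFn_le_sInf_AMI hne hcomp hQ hp hfeas⟩

theorem robust_capacity_eq_convex_reformulation
    {N M : ℕ} (hN : 0 < N) (hM : 0 < M)
    (𝒬 : Set (Fin N → Fin M → ℝ))
    (hne : 𝒬.Nonempty) (hcomp : IsCompact 𝒬) (hconv : Convex ℝ 𝒬)
    (hQ : ∀ Q ∈ 𝒬, rowStochPos Q) :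
    robustCap 𝒬 =
      sSup { x | ∃ p ∈ stdSimplex ℝ (Fin N), ∃ lam : Fin N → ℝ,
        ∃ V : Fin N → Fin M → ℝ,
          (∀ m, ∑ n, persp (p n) (lam n - V n m) ≤ 1) ∧
          x = (∑ n, lam n) - suppFn 𝒬 V } :=
  robust_capacity_eq_convex_reformulation_general 𝒬 hne hcomp hconv hQ
end

section
/- Let N, M ≥ 1 and let 𝒬 ⊆ ℝ^{N×M} be a nonempty compact convex set, each element of which is row-stochastic with strictly positive entries. Then strong duality holds between the robust channel capacity problem and its dual: sup_{p ∈ Δ_N} inf_{Q ∈ 𝒬} I(p,Q) = inf over v ∈ ℝ^M and Q ∈ 𝒬 of [ log( Σ_{m=1}^M exp(v_m) ) + max_{1 ≤ n ≤ N} Σ_{m=1}^M Q_{nm} ( log Q_{nm} − v_m ) ]. -/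
open Real

/-!
Write `D(q‖r) = ∑ qₘ log (qₘ / rₘ)`. The mutual information is `I(p,Q) = ∑ₙ pₙ D(Qₙ‖pQ)`, and for
every output distribution `r` one has `∑ₙ pₙ D(Qₙ‖r) = I(p,Q) + D(pQ‖r)`. At `(v, Q)` the dual
objective equals the divergence radius `maxₙ D(Qₙ‖r)` of the rows of `Q` about `r = softmax v`,
and every positive probability vector `r` is a softmax. Hence weak duality:
`I(p,Q) ≤ ∑ₙ pₙ D(Qₙ‖r) ≤ maxₙ D(Qₙ‖r)`.

Conversely, `(Q, r) ↦ D(Qₙ‖r)` is jointly convex, so separating the orthant below the dual optimum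
`β` from the values `(D(Qₙ‖r))ₙ` by a hyperplane yields weights `p ∈ Δ_N` with
`β ≤ ∑ₙ pₙ D(Qₙ‖r)` for all `Q ∈ 𝒬` and all `r`. Taking `r = pQ` gives `β ≤ inf_Q I(p,Q)`.
-/

open Finset Matrix Filter Topology

section RelativeEntropy

variable {ι : Type*} [Fintype ι]

noncomputable def relEntropy (q r : ι → ℝ) : ℝ := ∑ i, q i * log (q i / r i)

def posStdSimplex (ι : Type*) [Fintype ι] : Set (ι → ℝ) := {r | (∀ i, 0 < r i) ∧ ∑ i, r i = 1}

noncomputable def softmax (v : ι → ℝ) (i : ι) : ℝ := exp (v i) / ∑ j, exp (v j)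

lemma sub_le_mul_log_div {a b : ℝ} (ha : 0 ≤ a) (hb : 0 < b) : a - b ≤ a * log (a / b) := by
  rcases ha.eq_or_lt with rfl | ha
  · simpa using hb.le
  calc a - b = a * (1 - (a / b)⁻¹) := by field_simp
    _ ≤ a * log (a / b) := by gcongr; exact one_sub_inv_le_log_of_pos (div_pos ha hb)

lemma relEntropy_nonneg {q r : ι → ℝ} (hq : ∀ i, 0 ≤ q i) (hr : ∀ i, 0 < r i)
    (hqr : ∑ i, r i ≤ ∑ i, q i) : 0 ≤ relEntropy q r :=
  calc 0 ≤ ∑ i, q i - ∑ i, r i := sub_nonneg.2 hqr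
    _ = ∑ i, (q i - r i) := (sum_sub_distrib ..).symm
    _ ≤ relEntropy q r := sum_le_sum fun i _ => sub_le_mul_log_div (hq i) (hr i)

lemma relEntropy_eq_sum_mul_log_sub {q r : ι → ℝ} (hr : ∀ i, r i ≠ 0) :
    relEntropy q r = ∑ i, q i * (log (q i) - log (r i)) := by
  refine sum_congr rfl fun i _ => ?_
  rcases eq_or_ne (q i) 0 with hq | hq
  · simp [hq]
  · rw [log_div hq (hr i)]

lemma convexOn_mul_log_div :
    ConvexOn ℝ (Set.Ioi 0 ×ˢ Set.Ioi 0) fun z : ℝ × ℝ => z.1 * log (z.1 / z.2) := by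
  refine ⟨(convex_Ioi 0).prod (convex_Ioi 0), ?_⟩
  rintro ⟨x₁, y₁⟩ ⟨hx₁, hy₁⟩ ⟨x₂, y₂⟩ ⟨hx₂, hy₂⟩ a b ha hb hab
  have hx : 0 < a * x₁ + b * x₂ := convex_Ioi (0 : ℝ) hx₁ hx₂ ha hb hab
  have hy : 0 < a * y₁ + b * y₂ := convex_Ioi (0 : ℝ) hy₁ hy₂ ha hb hab
  set t := (a * x₁ + b * x₂) / (a * y₁ + b * y₂)
  have ht : 0 < t := div_pos hx hy
  have key : ∀ {x y : ℝ}, 0 < x → 0 < y → x - y * t ≤ x * log (x / y) - x * log t := by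
    intro x y hx hy
    have := sub_le_mul_log_div hx.le (mul_pos hy ht)
    rwa [div_mul_eq_div_div, log_div (div_pos hx hy).ne' ht.ne', mul_sub] at this
  have hyt : (a * y₁ + b * y₂) * t = a * x₁ + b * x₂ := mul_div_cancel₀ _ hy.ne'
  simp only [Prod.smul_mk, Prod.mk_add_mk, smul_eq_mul]
  nlinarith [mul_le_mul_of_nonneg_left (key hx₁ hy₁) ha,
    mul_le_mul_of_nonneg_left (key hx₂ hy₂) hb]

lemma convexOn_relEntropy :
    ConvexOn ℝ {z : (ι → ℝ) × (ι → ℝ) | ∀ i, 0 < z.1 i ∧ 0 < z.2 i}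
      fun z => relEntropy z.1 z.2 := by
  refine ⟨fun z₁ hz₁ z₂ hz₂ a b ha hb hab i =>
    ⟨convex_Ioi (0 : ℝ) (hz₁ i).1 (hz₂ i).1 ha hb hab,
      convex_Ioi (0 : ℝ) (hz₁ i).2 (hz₂ i).2 ha hb hab⟩,
    fun z₁ hz₁ z₂ hz₂ a b ha hb hab => ?_⟩
  simp only [relEntropy, smul_eq_mul, mul_sum, ← sum_add_distrib]
  exact sum_le_sum fun i _ => convexOn_mul_log_div.2 (x := (z₁.1 i, z₁.2 i))
    (y := (z₂.1 i, z₂.2 i)) (hz₁ i) (hz₂ i) ha hb hab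

lemma convex_posStdSimplex : Convex ℝ (posStdSimplex ι) := by
  rintro r₁ ⟨hr₁, hs₁⟩ r₂ ⟨hr₂, hs₂⟩ a b ha hb hab
  refine ⟨fun i => convex_Ioi (0 : ℝ) (hr₁ i) (hr₂ i) ha hb hab, ?_⟩
  simp [sum_add_distrib, ← mul_sum, hs₁, hs₂, hab]

lemma softmax_mem_posStdSimplex [Nonempty ι] (v : ι → ℝ) : softmax v ∈ posStdSimplex ι := by
  have hS : 0 < ∑ j, exp (v j) := sum_pos (fun j _ => exp_pos _) univ_nonempty
  exact ⟨fun i => div_pos (exp_pos _) hS, by simp only [softmax, ← sum_div, div_self hS.ne']⟩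

lemma softmax_log {r : ι → ℝ} (hr : r ∈ posStdSimplex ι) : softmax (fun i => log (r i)) = r := by
  ext i
  simp [softmax, exp_log (hr.1 _), hr.2]

lemma relEntropy_softmax [Nonempty ι] {q : ι → ℝ} (hq : ∑ i, q i = 1) (v : ι → ℝ) :
    relEntropy q (softmax v) = log (∑ i, exp (v i)) + ∑ i, q i * (log (q i) - v i) := by
  have hS : 0 < ∑ j, exp (v j) := sum_pos (fun j _ => exp_pos _) univ_nonempty
  rw [relEntropy_eq_sum_mul_log_sub fun i => ((softmax_mem_posStdSimplex v).1 i).ne']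
  simp only [softmax, log_div (exp_pos _).ne' hS.ne', log_exp]
  simp only [mul_sub, sum_sub_distrib, ← sum_mul, hq]
  ring

lemma convexOn_relEntropy_row {η : Type*} {𝒬 : Set (η → ι → ℝ)} (hconv : Convex ℝ 𝒬)
    (h𝒬 : ∀ Q ∈ 𝒬, ∀ n m, 0 < Q n m) (n : η) :
    ConvexOn ℝ (𝒬 ×ˢ posStdSimplex ι) fun z => relEntropy (z.1 n) z.2 :=
  (convexOn_relEntropy.comp_linearMap ((LinearMap.proj n).prodMap LinearMap.id)).subset
    (fun _ hz m => ⟨h𝒬 _ hz.1 n m, hz.2.1 m⟩) (hconv.prod convex_posStdSimplex)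

end RelativeEntropy

section Minimax

variable {ι E : Type*} [AddCommGroup E] [Module ℝ E]

lemma convex_setOf_exists_forall_le {Z : Set E} (hZ : Convex ℝ Z) {c : ι → E → ℝ}
    (hc : ∀ i, ConvexOn ℝ Z (c i)) : Convex ℝ {y : ι → ℝ | ∃ z ∈ Z, ∀ i, c i z ≤ y i} := by
  rintro y₁ ⟨z₁, hz₁, h₁⟩ y₂ ⟨z₂, hz₂, h₂⟩ a b ha hb hab
  refine ⟨a • z₁ + b • z₂, hZ hz₁ hz₂ ha hb hab, fun i => ?_⟩
  calc c i (a • z₁ + b • z₂) ≤ a * c i z₁ + b * c i z₂ := (hc i).2 hz₁ hz₂ ha hb hab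
    _ ≤ a * y₁ i + b * y₂ i := by gcongr <;> simp only [h₁, h₂]

lemma apply_single_nonneg_of_forall_lt [DecidableEq ι] {f : (ι → ℝ) →ₗ[ℝ] ℝ} {β u : ℝ}
    (hf : ∀ y, (∀ i, y i < β) → f y < u) (i : ι) : 0 ≤ f (Pi.single i 1) := by
  by_contra! hi
  set y₀ : ι → ℝ := fun _ => β - 1
  have hu : f y₀ < u := hf y₀ fun _ => by linarith
  -- along the ray `y₀ - t • eᵢ`, which stays below `β`, `f` would reach `u` at this `t`
  set t := (u - f y₀) / -f (Pi.single i 1)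
  have ht : 0 ≤ t := div_nonneg (by linarith) (by linarith)
  have hy : ∀ j, (y₀ - t • Pi.single i 1 : ι → ℝ) j < β := fun j => by
    have : 0 ≤ t * (Pi.single i 1 : ι → ℝ) j :=
      mul_nonneg ht (by rw [Pi.single_apply]; split_ifs <;> norm_num)
    simp only [Pi.sub_apply, Pi.smul_apply, smul_eq_mul, y₀]
    linarith
  have hft : f (y₀ - t • Pi.single i 1) = u := by
    have hte : t * -f (Pi.single i 1) = u - f y₀ := div_mul_cancel₀ _ (by linarith)
    rw [map_sub, map_smul, smul_eq_mul]
    linarith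
  exact (hf _ hy).ne hft

variable [Fintype ι]

lemma apply_eq_sum_mul_apply_single [DecidableEq ι] (f : (ι → ℝ) →ₗ[ℝ] ℝ) (y : ι → ℝ) :
    f y = ∑ i, y i * f (Pi.single i 1) := by
  conv_lhs => rw [pi_eq_sum_univ' y]
  simp

lemma mul_sum_apply_single_le_of_forall_lt [DecidableEq ι] {f : (ι → ℝ) →ₗ[ℝ] ℝ} {β u : ℝ}
    (hf : ∀ y, (∀ i, y i < β) → f y < u) : β * ∑ i, f (Pi.single i 1) ≤ u := by
  have hlim : Tendsto (fun x => x * ∑ i, f (Pi.single i 1)) (𝓝[<] β)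
      (𝓝 (β * ∑ i, f (Pi.single i 1))) :=
    ((continuous_mul_const _).tendsto β).mono_left nhdsWithin_le_nhds
  refine le_of_tendsto hlim (eventually_nhdsWithin_of_forall fun x (hx : x < β) => ?_)
  have := hf (fun _ => x) fun _ => hx
  rw [apply_eq_sum_mul_apply_single, ← mul_sum] at this
  exact this.le

/-- The weights are the normal of a hyperplane separating the open orthant below `β` from the
upward closure of the value vectors `(c i z)ᵢ`. -/
lemma exists_nonneg_weights_le_sum_mul {Z : Set E} (hZ : Z.Nonempty) {c : ι → E → ℝ}
    (hc : ∀ i, ConvexOn ℝ Z (c i)) {β : ℝ} (hβ : ∀ z ∈ Z, ∃ i, β ≤ c i z) :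
    ∃ w : ι → ℝ, (∀ i, 0 ≤ w i) ∧ 0 < ∑ i, w i ∧ ∀ z ∈ Z, β * ∑ i, w i ≤ ∑ i, w i * c i z := by
  classical
  obtain ⟨z₀, hz₀⟩ := hZ
  obtain ⟨i₀, -⟩ := hβ z₀ hz₀
  have hdisj : Disjoint (Set.univ.pi fun _ => Set.Iio β) {y | ∃ z ∈ Z, ∀ i, c i z ≤ y i} := by
    refine Set.disjoint_left.2 fun y hy ⟨z, hz, hzy⟩ => ?_
    obtain ⟨i, hi⟩ := hβ z hz
    exact (hi.trans (hzy i)).not_gt (hy i (Set.mem_univ i))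
  obtain ⟨f, u, hfC, hfK⟩ := geometric_hahn_banach_open (convex_pi fun _ _ => convex_Iio β)
    (isOpen_set_pi Set.finite_univ fun _ _ => isOpen_Iio)
    (convex_setOf_exists_forall_le (hc i₀).1 hc) hdisj
  have hf : ∀ y, (∀ i, y i < β) → (f : (ι → ℝ) →ₗ[ℝ] ℝ) y < u := fun y hy =>
    hfC y fun i _ => hy i
  have hfZ : ∀ z ∈ Z, u ≤ ∑ i, f (Pi.single i 1) * c i z := fun z hz => by
    have := hfK _ ⟨z, hz, fun _ => le_rfl⟩
    rw [← ContinuousLinearMap.coe_coe, apply_eq_sum_mul_apply_single] at this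
    simpa only [mul_comm, ContinuousLinearMap.coe_coe] using this
  refine ⟨fun i => f (Pi.single i 1), apply_single_nonneg_of_forall_lt hf,
    (sum_nonneg fun i _ => apply_single_nonneg_of_forall_lt hf i).lt_of_ne fun h => ?_,
    fun z hz => (mul_sum_apply_single_le_of_forall_lt hf).trans (hfZ z hz)⟩
  have hw0 : ∀ i, f (Pi.single i 1) = 0 := fun i => (sum_eq_zero_iff_of_nonneg fun i _ =>
    apply_single_nonneg_of_forall_lt hf i).1 h.symm i (mem_univ i)
  have h₁ := hf (fun _ => β - 1) fun _ => by linarith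
  have h₂ := hfZ z₀ hz₀
  rw [apply_eq_sum_mul_apply_single] at h₁
  simp only [ContinuousLinearMap.coe_coe, hw0, mul_zero, zero_mul, sum_const_zero] at h₁ h₂
  linarith

lemma exists_mem_stdSimplex_le_sum_mul {Z : Set E} (hZ : Z.Nonempty) {c : ι → E → ℝ}
    (hc : ∀ i, ConvexOn ℝ Z (c i)) {β : ℝ} (hβ : ∀ z ∈ Z, ∃ i, β ≤ c i z) :
    ∃ p ∈ stdSimplex ℝ ι, ∀ z ∈ Z, β ≤ ∑ i, p i * c i z := by
  obtain ⟨w, hw, hwpos, hwZ⟩ := exists_nonneg_weights_le_sum_mul hZ hc hβ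
  refine ⟨fun i => w i / ∑ j, w j,
    ⟨fun i => div_nonneg (hw i) hwpos.le, by rw [← sum_div, div_self hwpos.ne']⟩, fun z hz => ?_⟩
  simp only [div_mul_eq_mul_div, ← sum_div]
  exact (le_div_iff₀ hwpos).2 (hwZ z hz)

end Minimax

section Channel

variable {ι κ : Type*} [Fintype ι] [Fintype κ]

lemma sum_mul_le_sup'_of_mem_stdSimplex {p : ι → ℝ} (hp : p ∈ stdSimplex ℝ ι)
    (hs : (univ : Finset ι).Nonempty) (f : ι → ℝ) : ∑ i, p i * f i ≤ univ.sup' hs f :=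
  calc ∑ i, p i * f i ≤ ∑ i, p i * univ.sup' hs f :=
        sum_le_sum fun i hi => mul_le_mul_of_nonneg_left (le_sup' f hi) (hp.1 i)
    _ = univ.sup' hs f := by rw [← sum_mul, hp.2, one_mul]

noncomputable def divRadius (hs : (univ : Finset ι).Nonempty) (Q : ι → κ → ℝ) (r : κ → ℝ) : ℝ :=
  univ.sup' hs fun n => relEntropy (Q n) r

lemma divRadius_nonneg (hs : (univ : Finset ι).Nonempty) {Q : ι → κ → ℝ}
    (hQ : ∀ n m, 0 ≤ Q n m) (hQ1 : ∀ n, ∑ m, Q n m = 1) {r : κ → ℝ} (hr : r ∈ posStdSimplex κ) :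
    0 ≤ divRadius hs Q r := by
  obtain ⟨n, hn⟩ := hs
  exact le_sup'_of_le _ hn (relEntropy_nonneg (hQ n) hr.1 (by rw [hr.2, hQ1 n]))

lemma log_sum_exp_add_sup'_eq_divRadius (hs : (univ : Finset ι).Nonempty) [Nonempty κ]
    {Q : ι → κ → ℝ} (hQ1 : ∀ n, ∑ m, Q n m = 1) (v : κ → ℝ) :
    log (∑ m, exp (v m)) + univ.sup' hs (fun n => ∑ m, Q n m * (log (Q n m) - v m)) =
      divRadius hs Q (softmax v) := by
  rw [add_sup']
  exact sup'_congr hs rfl fun n _ => (relEntropy_softmax (hQ1 n) v).symm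

lemma setOf_log_sum_exp_add_sup'_eq (hs : (univ : Finset ι).Nonempty) [Nonempty κ]
    {𝒬 : Set (ι → κ → ℝ)} (h𝒬 : ∀ Q ∈ 𝒬, ∀ n, ∑ m, Q n m = 1) :
    {x | ∃ v : κ → ℝ, ∃ Q ∈ 𝒬,
      x = log (∑ m, exp (v m)) + univ.sup' hs (fun n => ∑ m, Q n m * (log (Q n m) - v m))} =
      {x | ∃ Q ∈ 𝒬, ∃ r ∈ posStdSimplex κ, x = divRadius hs Q r} := by
  ext x
  constructor
  · rintro ⟨v, Q, hQ, rfl⟩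
    exact ⟨Q, hQ, softmax v, softmax_mem_posStdSimplex v,
      log_sum_exp_add_sup'_eq_divRadius hs (h𝒬 Q hQ) v⟩
  · rintro ⟨Q, hQ, r, hr, rfl⟩
    refine ⟨fun m => log (r m), Q, hQ, ?_⟩
    rw [log_sum_exp_add_sup'_eq_divRadius hs (h𝒬 Q hQ), softmax_log hr]

end Channel

section MutualInformation

variable {N M : ℕ}

lemma vecMul_mem_posStdSimplex {p : Fin N → ℝ} (hp : p ∈ stdSimplex ℝ (Fin N))
    {Q : Fin N → Fin M → ℝ} (hQ : rowStochPos Q) : p ᵥ* Q ∈ posStdSimplex (Fin M) := by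
  obtain ⟨n, -, hn⟩ := exists_lt_of_sum_lt (s := univ) (f := 0) (g := p) (by simp [hp.2])
  refine ⟨fun m => sum_pos' (fun l _ => mul_nonneg (hp.1 l) (hQ.1 l m).le)
    ⟨n, mem_univ n, mul_pos hn (hQ.1 n m)⟩, ?_⟩
  simp only [vecMul, dotProduct]
  rw [sum_comm]
  simp [← mul_sum, hQ.2, hp.2]

lemma AMI_eq_sum_mul_relEntropy (p : Fin N → ℝ) (Q : Fin N → Fin M → ℝ) :
    AMI p Q = ∑ n, p n * relEntropy (Q n) (p ᵥ* Q) := by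
  simp only [AMI, relEntropy, mul_sum, mul_assoc]
  rfl

lemma sum_mul_relEntropy_eq_AMI_add {p : Fin N → ℝ} {Q : Fin N → Fin M → ℝ} {r : Fin M → ℝ}
    (hpQ : ∀ m, (p ᵥ* Q) m ≠ 0) (hr : ∀ m, r m ≠ 0) :
    ∑ n, p n * relEntropy (Q n) r = AMI p Q + relEntropy (p ᵥ* Q) r := by
  have hmix : relEntropy (p ᵥ* Q) r =
      ∑ n, p n * ∑ m, Q n m * (log ((p ᵥ* Q) m) - log (r m)) := by
    rw [relEntropy_eq_sum_mul_log_sub hr]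
    simp only [vecMul, dotProduct, sum_mul, mul_sum]
    rw [sum_comm]
    simp only [mul_assoc]
  rw [AMI_eq_sum_mul_relEntropy, hmix, ← sum_add_distrib]
  refine sum_congr rfl fun n _ => ?_
  rw [relEntropy_eq_sum_mul_log_sub hr, relEntropy_eq_sum_mul_log_sub hpQ, ← mul_add,
    ← sum_add_distrib]
  ring_nf

lemma AMI_nonneg {p : Fin N → ℝ} (hp : p ∈ stdSimplex ℝ (Fin N)) {Q : Fin N → Fin M → ℝ}
    (hQ : rowStochPos Q) : 0 ≤ AMI p Q := by
  have hpQ := vecMul_mem_posStdSimplex hp hQ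
  rw [AMI_eq_sum_mul_relEntropy]
  exact sum_nonneg fun n _ => mul_nonneg (hp.1 n)
    (relEntropy_nonneg (fun m => (hQ.1 n m).le) hpQ.1 (by rw [hpQ.2, hQ.2 n]))

lemma AMI_le_divRadius {p : Fin N → ℝ} (hp : p ∈ stdSimplex ℝ (Fin N))
    {Q : Fin N → Fin M → ℝ} (hQ : rowStochPos Q) {r : Fin M → ℝ} (hr : r ∈ posStdSimplex (Fin M))
    (hs : (univ : Finset (Fin N)).Nonempty) : AMI p Q ≤ divRadius hs Q r := by
  have hpQ := vecMul_mem_posStdSimplex hp hQ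
  calc AMI p Q ≤ AMI p Q + relEntropy (p ᵥ* Q) r :=
        le_add_of_nonneg_right
          (relEntropy_nonneg (fun m => (hpQ.1 m).le) hr.1 (by rw [hr.2, hpQ.2]))
    _ = ∑ n, p n * relEntropy (Q n) r :=
        (sum_mul_relEntropy_eq_AMI_add (fun m => (hpQ.1 m).ne') fun m => (hr.1 m).ne').symm
    _ ≤ divRadius hs Q r := sum_mul_le_sup'_of_mem_stdSimplex hp hs _

lemma sInf_AMI_le_divRadius (hs : (univ : Finset (Fin N)).Nonempty)
    {𝒬 : Set (Fin N → Fin M → ℝ)} (hQ : ∀ Q ∈ 𝒬, rowStochPos Q) {p : Fin N → ℝ}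
    (hp : p ∈ stdSimplex ℝ (Fin N)) {Q : Fin N → Fin M → ℝ} (hQ𝒬 : Q ∈ 𝒬)
    {r : Fin M → ℝ} (hr : r ∈ posStdSimplex (Fin M)) :
    sInf {y | ∃ Q ∈ 𝒬, y = AMI p Q} ≤ divRadius hs Q r := by
  have hbdd : BddBelow {y | ∃ Q ∈ 𝒬, y = AMI p Q} :=
    ⟨0, by rintro _ ⟨Q', hQ', rfl⟩; exact AMI_nonneg hp (hQ Q' hQ')⟩
  exact (csInf_le hbdd ⟨Q, hQ𝒬, rfl⟩).trans (AMI_le_divRadius hp (hQ Q hQ𝒬) hr hs)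

lemma exists_mem_stdSimplex_sInf_divRadius_le (hs : (univ : Finset (Fin N)).Nonempty)
    {𝒬 : Set (Fin N → Fin M → ℝ)} (hne : 𝒬.Nonempty) (hconv : Convex ℝ 𝒬)
    (hQ : ∀ Q ∈ 𝒬, rowStochPos Q) :
    ∃ p ∈ stdSimplex ℝ (Fin N),
      sInf {x | ∃ Q ∈ 𝒬, ∃ r ∈ posStdSimplex (Fin M), x = divRadius hs Q r} ≤
        sInf {y | ∃ Q ∈ 𝒬, y = AMI p Q} := by
  set D := {x | ∃ Q ∈ 𝒬, ∃ r ∈ posStdSimplex (Fin M), x = divRadius hs Q r}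
  have hD : BddBelow D := ⟨0, by
    rintro _ ⟨Q, hQ𝒬, r, hr, rfl⟩
    exact divRadius_nonneg hs (fun n m => ((hQ Q hQ𝒬).1 n m).le) (hQ Q hQ𝒬).2 hr⟩
  obtain ⟨Q₀, hQ₀⟩ := hne
  have hZ : (𝒬 ×ˢ posStdSimplex (Fin M)).Nonempty :=
    ⟨(Q₀, Q₀ hs.choose), hQ₀, (hQ Q₀ hQ₀).1 _, (hQ Q₀ hQ₀).2 _⟩
  have hβ (z) (hz : z ∈ 𝒬 ×ˢ posStdSimplex (Fin M)) : ∃ n, sInf D ≤ relEntropy (z.1 n) z.2 := by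
    obtain ⟨n, -, hn⟩ := exists_mem_eq_sup' hs fun n => relEntropy (z.1 n) z.2
    exact ⟨n, hn ▸ csInf_le hD ⟨z.1, hz.1, z.2, hz.2, rfl⟩⟩
  obtain ⟨p, hp, hpZ⟩ := exists_mem_stdSimplex_le_sum_mul hZ
    (convexOn_relEntropy_row hconv fun Q hQ𝒬 => (hQ Q hQ𝒬).1) hβ
  refine ⟨p, hp, le_csInf ⟨_, Q₀, hQ₀, rfl⟩ ?_⟩
  rintro _ ⟨Q, hQ𝒬, rfl⟩
  rw [AMI_eq_sum_mul_relEntropy]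
  exact hpZ (Q, p ᵥ* Q) ⟨hQ𝒬, vecMul_mem_posStdSimplex hp (hQ Q hQ𝒬)⟩

end MutualInformation

theorem robust_capacity_strong_duality_general
    {N M : ℕ} (hN : 0 < N) (hM : 0 < M)
    (𝒬 : Set (Fin N → Fin M → ℝ))
    (hne : 𝒬.Nonempty) (hconv : Convex ℝ 𝒬)
    (hQ : ∀ Q ∈ 𝒬, rowStochPos Q) :
    robustCap 𝒬 =
      sInf { x | ∃ v : Fin M → ℝ, ∃ Q ∈ 𝒬,
        x = Real.log (∑ m, Real.exp (v m)) +
          Finset.univ.sup' (Finset.univ_nonempty_iff.mpr (Fin.pos_iff_nonempty.mp hN))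
            (fun n => ∑ m, Q n m * (Real.log (Q n m) - v m)) } := by
  have : Nonempty (Fin M) := Fin.pos_iff_nonempty.mp hM
  set hs := Finset.univ_nonempty_iff.mpr (Fin.pos_iff_nonempty.mp hN)
  rw [setOf_log_sum_exp_add_sup'_eq hs fun Q hQ𝒬 => (hQ Q hQ𝒬).2]
  set D := {x | ∃ Q ∈ 𝒬, ∃ r ∈ posStdSimplex (Fin M), x = divRadius hs Q r}
  have hD : D.Nonempty :=
    ⟨_, hne.some, hne.some_mem, softmax 0, softmax_mem_posStdSimplex 0, rfl⟩
  have hweak (p) (hp : p ∈ stdSimplex ℝ (Fin N)) :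
      ∀ x ∈ D, sInf {y | ∃ Q ∈ 𝒬, y = AMI p Q} ≤ x := by
    rintro _ ⟨Q, hQ𝒬, r, hr, rfl⟩
    exact sInf_AMI_le_divRadius hs hQ hp hQ𝒬 hr
  obtain ⟨p, hp, hpD⟩ := exists_mem_stdSimplex_sInf_divRadius_le hs hne hconv hQ
  have hbdd :
      BddAbove {x | ∃ p ∈ stdSimplex ℝ (Fin N), x = sInf {y | ∃ Q ∈ 𝒬, y = AMI p Q}} := by
    obtain ⟨x, hx⟩ := hD
    exact ⟨x, by rintro _ ⟨p', hp', rfl⟩; exact hweak p' hp' x hx⟩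
  unfold robustCap
  refine le_antisymm (csSup_le ⟨_, p, hp, rfl⟩ ?_) (hpD.trans (le_csSup hbdd ⟨p, hp, rfl⟩))
  rintro _ ⟨p', hp', rfl⟩
  exact le_csInf hD (hweak p' hp')

theorem robust_capacity_strong_duality
    {N M : ℕ} (hN : 0 < N) (hM : 0 < M)
    (𝒬 : Set (Fin N → Fin M → ℝ))
    (hne : 𝒬.Nonempty) (hcomp : IsCompact 𝒬) (hconv : Convex ℝ 𝒬)
    (hQ : ∀ Q ∈ 𝒬, rowStochPos Q) :
    robustCap 𝒬 =
      sInf { x | ∃ v : Fin M → ℝ, ∃ Q ∈ 𝒬,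
        x = Real.log (∑ m, Real.exp (v m)) +
          Finset.univ.sup' (Finset.univ_nonempty_iff.mpr (Fin.pos_iff_nonempty.mp hN))
            (fun n => ∑ m, Q n m * (Real.log (Q n m) - v m)) } :=
  robust_capacity_strong_duality_general hN hM 𝒬 hne hconv hQ
end

section
/- Let 0 < β̲ ≤ β̄ < 1 with β̲ ≤ 1/2, and let 𝒬 = { [[1−β, β],[β, 1−β]] : β ∈ [β̲, β̄] } ⊆ ℝ^{2×2} be the uncertainty set of a binary symmetric channel. Set β* = min{1/2, β̄}. Then the robust channel capacity is sup_{p ∈ Δ_2} inf_{Q ∈ 𝒬} I(p,Q) = log 2 + β* log β* + (1−β*) log(1−β*). -/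
open Real

lemma binEnt_eq (x : ℝ) : Real.binEntropy x = -(x * Real.log x + (1 - x) * Real.log (1 - x)) := by
  simp [Real.binEntropy, Real.log_inv]; ring

lemma ami_bsc (p : Fin 2 → ℝ) (hp : p ∈ stdSimplex ℝ (Fin 2)) (β : ℝ)
    (hβ0 : 0 < β) (hβ1 : β < 1) :
    AMI p ![![1 - β, β], ![β, 1 - β]] =
      Real.binEntropy (p 0 * (1 - β) + p 1 * β) - Real.binEntropy β := by
  have hp0 := hp.1 0
  have hp1 := hp.1 1
  have hsum : p 0 + p 1 = 1 := by
    have := hp.2; rwa [Fin.sum_univ_two] at this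
  have hb1 : (0:ℝ) < 1 - β := by linarith
  have hq0 : 0 < p 0 * (1 - β) + p 1 * β := by
    nlinarith [mul_nonneg (mul_nonneg hp0 hb1.le) hb1.le,
      mul_nonneg (mul_nonneg hp1 hβ0.le) hβ0.le, mul_pos hβ0 hb1]
  have hq1 : 0 < p 0 * β + p 1 * (1 - β) := by
    nlinarith [mul_nonneg (mul_nonneg hp1 hb1.le) hb1.le,
      mul_nonneg (mul_nonneg hp0 hβ0.le) hβ0.le, mul_pos hβ0 hb1]
  have h1q0 : 1 - (p 0 * (1 - β) + p 1 * β) = p 0 * β + p 1 * (1 - β) := by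
    linear_combination -hsum
  have hp1' : p 1 = 1 - p 0 := by linarith
  simp only [AMI, Fin.sum_univ_two, Matrix.cons_val_zero, Matrix.cons_val_one, Matrix.head_cons]
  rw [Real.log_div (by linarith) (by positivity), Real.log_div (by linarith) (by positivity),
    Real.log_div (by linarith) (by positivity), Real.log_div (by linarith) (by positivity)]
  rw [Real.binEntropy, Real.binEntropy, h1q0, Real.log_inv, Real.log_inv, Real.log_inv,
    Real.log_inv, hp1']
  ring

theorem robust_capacity_binary_symmetric_channel
    (βl βu : ℝ) (h0 : 0 < βl) (hle : βl ≤ βu) (h1 : βu < 1) (hhalf : βl ≤ 1 / 2)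
    (𝒬 : Set (Fin 2 → Fin 2 → ℝ))
    (h𝒬 : 𝒬 = { Q | ∃ β ∈ Set.Icc βl βu, Q = ![![1 - β, β], ![β, 1 - β]] }) :
    robustCap 𝒬 =
      Real.log 2 + min (1 / 2) βu * Real.log (min (1 / 2) βu) +
        (1 - min (1 / 2) βu) * Real.log (1 - min (1 / 2) βu) := by
  set s := min (1 / 2) βu with hs
  have hs0 : 0 < s := lt_min (by norm_num) (lt_of_lt_of_le h0 hle)
  have hs1 : s < 1 := lt_of_le_of_lt (min_le_right _ _) h1
  have hsl : βl ≤ s := le_min hhalf hle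
  have hsu : s ≤ βu := min_le_right _ _
  have hsIcc : s ∈ Set.Icc βl βu := ⟨hsl, hsu⟩
  set C : ℝ := Real.log 2 - Real.binEntropy s with hC
  -- the target equals C
  have htarget : Real.log 2 + s * Real.log s + (1 - s) * Real.log (1 - s) = C := by
    rw [hC, binEnt_eq]; ring
  rw [htarget]
  -- binEntropy is maximized on [βl, βu] at s
  have hmax : ∀ β ∈ Set.Icc βl βu, Real.binEntropy β ≤ Real.binEntropy s := by
    intro β hβ
    rcases le_or_gt βu (1/2) with h | h
    · have hss : s = βu := min_eq_right h
      rw [hss]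
      rcases eq_or_lt_of_le hβ.2 with he | hlt
      · rw [he]
      · exact le_of_lt (Real.binEntropy_strictMonoOn
          ⟨by linarith [hβ.1], by norm_num; linarith [hβ.2]⟩
          ⟨(h0.trans_le hle).le, by norm_num; linarith⟩ hlt)
    · have hss : s = 1/2 := min_eq_left (le_of_lt h)
      rw [hss]
      have h2 : (1/2 : ℝ) = 2⁻¹ := by norm_num
      rw [h2, Real.binEntropy_two_inv]
      exact Real.binEntropy_le_log_two
  -- uniform distribution
  set u : Fin 2 → ℝ := fun _ => 1/2 with hu
  have huS : u ∈ stdSimplex ℝ (Fin 2) := ⟨fun i => by simp only [hu]; norm_num, by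
    simp [hu, Fin.sum_univ_two]⟩
  have hami_u : ∀ β : ℝ, 0 < β → β < 1 →
      AMI u ![![1 - β, β], ![β, 1 - β]] = Real.log 2 - Real.binEntropy β := by
    intro β hb0 hb1
    rw [ami_bsc u huS β hb0 hb1]
    have : u 0 * (1 - β) + u 1 * β = 2⁻¹ := by simp only [hu]; ring
    rw [this, Real.binEntropy_two_inv]
  -- per-p upper bound
  have keyA : ∀ p ∈ stdSimplex ℝ (Fin 2),
      sInf { y | ∃ Q ∈ 𝒬, y = AMI p Q } ≤ C := by
    intro p hp
    have hmem : AMI p ![![1 - s, s], ![s, 1 - s]] ∈ { y | ∃ Q ∈ 𝒬, y = AMI p Q } := by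
      exact ⟨_, by rw [h𝒬]; exact ⟨s, hsIcc, rfl⟩, rfl⟩
    have hle' : AMI p ![![1 - s, s], ![s, 1 - s]] ≤ C := by
      rw [ami_bsc p hp s hs0 hs1, hC]
      have hq0 : 0 ≤ p 0 * (1 - s) + p 1 * s := by
        have := hp.1 0; have := hp.1 1; nlinarith
      have hq1 : p 0 * (1 - s) + p 1 * s ≤ 1 := by
        have h20 := hp.1 0; have h21 := hp.1 1
        have hsum : p 0 + p 1 = 1 := by
          have := hp.2; rwa [Fin.sum_univ_two] at this
        nlinarith
      linarith [Real.binEntropy_le_log_two (p := p 0 * (1 - s) + p 1 * s)]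
    by_cases hbdd : BddBelow { y | ∃ Q ∈ 𝒬, y = AMI p Q }
    · exact le_trans (csInf_le hbdd hmem) hle'
    · rw [Real.sInf_of_not_bddBelow hbdd]
      rw [hC]; linarith [Real.binEntropy_le_log_two (p := s)]
  -- uniform achieves C
  have keyB : sInf { y | ∃ Q ∈ 𝒬, y = AMI u Q } = C := by
    have hlb : ∀ y ∈ { y | ∃ Q ∈ 𝒬, y = AMI u Q }, C ≤ y := by
      rintro y ⟨Q, hQ, rfl⟩
      rw [h𝒬] at hQ
      obtain ⟨β, hβ, rfl⟩ := hQ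
      rw [hami_u β (lt_of_lt_of_le h0 hβ.1) (lt_of_le_of_lt hβ.2 h1), hC]
      linarith [hmax β hβ]
    have hmem : C ∈ { y | ∃ Q ∈ 𝒬, y = AMI u Q } := by
      refine ⟨![![1 - s, s], ![s, 1 - s]], by rw [h𝒬]; exact ⟨s, hsIcc, rfl⟩, ?_⟩
      rw [hami_u s hs0 hs1]
    exact le_antisymm (csInf_le ⟨C, fun y hy => hlb y hy⟩ hmem)
      (le_csInf ⟨C, hmem⟩ hlb)
  -- conclude
  rw [robustCap]
  have hCmem : C ∈ { x | ∃ p ∈ stdSimplex ℝ (Fin 2),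
      x = sInf { y | ∃ Q ∈ 𝒬, y = AMI p Q } } := ⟨u, huS, keyB.symm⟩
  have hub : ∀ x ∈ { x | ∃ p ∈ stdSimplex ℝ (Fin 2),
      x = sInf { y | ∃ Q ∈ 𝒬, y = AMI p Q } }, x ≤ C := by
    rintro x ⟨p, hp, rfl⟩; exact keyA p hp
  exact le_antisymm (csSup_le ⟨C, hCmem⟩ hub) (le_csSup ⟨C, hub⟩ hCmem)
end

section
/- Let N, M ≥ 1 and τ > 0. Let f(Q,p) = Σ_{n=1}^N Σ_{m=1}^M p_n Q_{nm} log(Q_{nm} / Σ_{l=1}^N p_l Q_{lm}), viewed as a real-valued function of (Q,p) ∈ ℝ^{N×M} × ℝ^N on the open set where all Q_{nm} > 0 and all Σ_{l=1}^N p_l Q_{lm} > 0. Then f is differentiable on this open set, and the gradient mapping (Q,p) ↦ (∇_Q f(Q,p), ∇_p f(Q,p)), restricted to the set D_τ = {(Q,p) : Q row-stochastic with Q_{nm} ≥ τ for all n,m, and p ∈ Δ_N}, is Lipschitz continuous: there exists L ≥ 0 such that ‖(∇_Q f(Q,p), ∇_p f(Q,p)) − (∇_Q f(Q',p'), ∇_p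 f(Q',p'))‖ ≤ L‖(Q,p)−(Q',p')‖ for all (Q,p), (Q',p') ∈ D_τ, where ‖·‖ is the Euclidean norm. -/
/-!
The mutual information `I(Q, p) = ∑ₙ ∑ₘ pₙ Qₙₘ log (Qₙₘ / (pQ)ₘ)` is built from products, quotients
and logarithms of positive quantities, hence is `C²` (indeed smooth) wherever all `Qₙₘ` and all
output probabilities `(pQ)ₘ` are positive. On `D_τ` the entries of `Q` are at least `τ > 0` and `p`
is a probability vector, so `D_τ` lies in that region; it is moreover the product of a compact convex
set of row-stochastic matrices with the simplex. A `C²` map has a `C¹` derivative, and a `C¹` map is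
Lipschitz on a compact convex set by the mean value inequality.
-/

open Real

theorem exists_norm_fderiv_sub_le_of_contDiffAt
    {E F : Type*} [NormedAddCommGroup E] [NormedSpace ℝ E] [NormedAddCommGroup F]
    [NormedSpace ℝ F] {f : E → F} {K : Set E} (hK : IsCompact K) (hKc : Convex ℝ K)
    (hf : ∀ z ∈ K, ContDiffAt ℝ 2 f z) :
    ∃ L : ℝ, 0 ≤ L ∧ ∀ z ∈ K, ∀ z' ∈ K, ‖fderiv ℝ f z - fderiv ℝ f z'‖ ≤ L * ‖z - z'‖ := by
  obtain ⟨L, hL⟩ := ContDiffOn.exists_lipschitzOnWith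
    (fun z hz => ((hf z hz).fderiv_right (m := 1) le_rfl).contDiffWithinAt) one_ne_zero hKc hK
  refine ⟨L, L.2, fun z hz z' hz' => ?_⟩
  simpa only [dist_eq_norm] using hL.dist_le_mul z hz z' hz'

theorem sum_mul_pos_of_mem_stdSimplex {ι : Type*} [Fintype ι] {p x : ι → ℝ}
    (hp : p ∈ stdSimplex ℝ ι) (hx : ∀ i, 0 < x i) : 0 < ∑ i, p i * x i := by
  obtain ⟨i, -, hi⟩ : ∃ i ∈ Finset.univ, (0 : ι → ℝ) i < p i :=
    Finset.exists_lt_of_sum_lt (by simp [hp.2])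
  exact Finset.sum_pos' (fun j _ => mul_nonneg (hp.1 j) (hx j).le)
    ⟨i, Finset.mem_univ i, mul_pos hi (hx i)⟩

section Channel

variable {ι κ : Type*} [Fintype κ]

theorem isCompact_pi_stdSimplex_inter_Ici (τ : ℝ) :
    IsCompact (Set.univ.pi fun _ : ι => stdSimplex ℝ κ ∩ Set.Ici fun _ => τ) :=
  isCompact_univ_pi fun _ => (isCompact_stdSimplex ℝ κ).inter_right isClosed_Ici

theorem convex_pi_stdSimplex_inter_Ici (τ : ℝ) :
    Convex ℝ (Set.univ.pi fun _ : ι => stdSimplex ℝ κ ∩ Set.Ici fun _ => τ) :=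
  convex_pi fun _ _ => (convex_stdSimplex ℝ κ).inter (convex_Ici _)

variable [Fintype ι]

noncomputable def mutualInformation (z : (ι → κ → ℝ) × (ι → ℝ)) : ℝ :=
  ∑ n, ∑ m, z.2 n * z.1 n m * log (z.1 n m / ∑ l, z.2 l * z.1 l m)

theorem contDiffAt_mutualInformation {k : WithTop ℕ∞} {z : (ι → κ → ℝ) × (ι → ℝ)}
    (hQ : ∀ n m, 0 < z.1 n m) (hout : ∀ m, 0 < ∑ l, z.2 l * z.1 l m) :
    ContDiffAt ℝ k mutualInformation z := by
  have entry : ∀ n m, ContDiff ℝ k fun w : (ι → κ → ℝ) × (ι → ℝ) => w.1 n m :=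
    fun n m => (contDiff_apply_apply ℝ ℝ n m).comp contDiff_fst
  have input : ∀ n, ContDiff ℝ k fun w : (ι → κ → ℝ) × (ι → ℝ) => w.2 n :=
    fun n => (contDiff_apply ℝ ℝ n).comp contDiff_snd
  have output : ∀ m, ContDiff ℝ k fun w : (ι → κ → ℝ) × (ι → ℝ) => ∑ l, w.2 l * w.1 l m :=
    fun m => ContDiff.sum fun l _ => (input l).mul (entry l m)
  refine ContDiffAt.sum fun n _ => ContDiffAt.sum fun m _ => ?_
  refine ((input n).mul (entry n m)).contDiffAt.mul (ContDiffAt.log ?_ ?_)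
  · exact (entry n m).contDiffAt.div (output m).contDiffAt (hout m).ne'
  · exact (div_pos (hQ n m) (hout m)).ne'

theorem setOf_channel_eq_prod {τ : ℝ} (hτ : 0 ≤ τ) :
    {z : (ι → κ → ℝ) × (ι → ℝ) | (∀ n m, τ ≤ z.1 n m) ∧ (∀ n, ∑ m, z.1 n m = 1) ∧
      z.2 ∈ stdSimplex ℝ ι} =
    (Set.univ.pi fun _ => stdSimplex ℝ κ ∩ Set.Ici fun _ => τ) ×ˢ stdSimplex ℝ ι := by
  ext ⟨Q, p⟩
  simp only [Set.mem_ofPred_eq, Set.mem_prod, Set.mem_univ_pi, Set.mem_inter_iff, Set.mem_Ici,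
    Pi.le_def, stdSimplex]
  constructor
  · rintro ⟨hQτ, hrow, hp⟩
    exact ⟨fun n => ⟨⟨fun m => hτ.trans (hQτ n m), hrow n⟩, hQτ n⟩, hp⟩
  · rintro ⟨hQ, hp⟩
    exact ⟨fun n => (hQ n).2, fun n => (hQ n).1.2, hp⟩

end Channel

theorem gradient_of_AMI_lipschitz_on_positive_channels_general
    {N M : ℕ} (τ : ℝ) (hτ : 0 < τ)
    (f : (Fin N → Fin M → ℝ) × (Fin N → ℝ) → ℝ)
    (hf : f = fun z => ∑ n, ∑ m,
      z.2 n * z.1 n m * Real.log (z.1 n m / ∑ l, z.2 l * z.1 l m))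
    (U : Set ((Fin N → Fin M → ℝ) × (Fin N → ℝ)))
    (hU : U = { z | (∀ n m, 0 < z.1 n m) ∧ ∀ m, 0 < ∑ l, z.2 l * z.1 l m })
    (D : Set ((Fin N → Fin M → ℝ) × (Fin N → ℝ)))
    (hD : D = { z | (∀ n m, τ ≤ z.1 n m) ∧ (∀ n, ∑ m, z.1 n m = 1) ∧
      z.2 ∈ stdSimplex ℝ (Fin N) }) :
    DifferentiableOn ℝ f U ∧
      ∃ L : ℝ, 0 ≤ L ∧ ∀ z ∈ D, ∀ z' ∈ D,
        ‖fderiv ℝ f z - fderiv ℝ f z'‖ ≤ L * ‖z - z'‖ := by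
  subst hf hU hD
  refine ⟨fun z hz => ((contDiffAt_mutualInformation (k := 1) hz.1 hz.2).differentiableAt
    one_ne_zero).differentiableWithinAt, ?_⟩
  rw [setOf_channel_eq_prod hτ.le]
  refine exists_norm_fderiv_sub_le_of_contDiffAt
    ((isCompact_pi_stdSimplex_inter_Ici τ).prod (isCompact_stdSimplex ℝ _))
    ((convex_pi_stdSimplex_inter_Ici τ).prod (convex_stdSimplex ℝ _)) ?_
  rintro ⟨Q, p⟩ ⟨hQ, hp⟩
  have hQpos : ∀ n m, 0 < Q n m := fun n m => hτ.trans_le ((hQ n trivial).2 m)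
  exact contDiffAt_mutualInformation hQpos fun m => sum_mul_pos_of_mem_stdSimplex hp (hQpos · m)

theorem gradient_of_AMI_lipschitz_on_positive_channels
    {N M : ℕ} (hN : 0 < N) (hM : 0 < M) (τ : ℝ) (hτ : 0 < τ)
    (f : (Fin N → Fin M → ℝ) × (Fin N → ℝ) → ℝ)
    (hf : f = fun z => ∑ n, ∑ m,
      z.2 n * z.1 n m * Real.log (z.1 n m / ∑ l, z.2 l * z.1 l m))
    (U : Set ((Fin N → Fin M → ℝ) × (Fin N → ℝ)))
    (hU : U = { z | (∀ n m, 0 < z.1 n m) ∧ ∀ m, 0 < ∑ l, z.2 l * z.1 l m })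
    (D : Set ((Fin N → Fin M → ℝ) × (Fin N → ℝ)))
    (hD : D = { z | (∀ n m, τ ≤ z.1 n m) ∧ (∀ n, ∑ m, z.1 n m = 1) ∧
      z.2 ∈ stdSimplex ℝ (Fin N) }) :
    DifferentiableOn ℝ f U ∧
      ∃ L : ℝ, 0 ≤ L ∧ ∀ z ∈ D, ∀ z' ∈ D,
        ‖fderiv ℝ f z - fderiv ℝ f z'‖ ≤ L * ‖z - z'‖ :=
  gradient_of_AMI_lipschitz_on_positive_channels_general τ hτ f hf U hU D hD
end

section
/- Let N, M ≥ 1, let Q ∈ ℝ^{N×M} be row-stochastic with strictly positive entries, let a ∈ ℝ^N with a_n ≥ 0 for all n, and let b ∈ ℝ satisfy min_n a_n < b. Define g(λ) = sup_{p ∈ Δ_N} [ I(p,Q) + λ(b − Σ_{n=1}^N a_n p_n) ] for λ ∈ ℝ. Then g is strictly increasing to the right of Λ₀ := log N / (b − min_n a_n): for all Λ', t with Λ₀ < Λ' < t, one has g(t) > g(Λ'). Consequently, inf_{λ ≥ 0} g(λ) = inf_{0 ≤ λ ≤ Λ'} g(λ) for every Λ' > Λ₀. -/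
open Real

/-- The Lagrangian dual function `g(λ)` of the average-cost constrained capacity problem. -/
noncomputable def gfun {N M : ℕ} (Q : Fin N → Fin M → ℝ) (a : Fin N → ℝ) (b : ℝ)
    (lam : ℝ) : ℝ :=
  sSup { x | ∃ p ∈ stdSimplex ℝ (Fin N), x = AMI p Q + lam * (b - ∑ n, a n * p n) }

/-! The dual function `g` is a pointwise supremum of the affine functions
`λ ↦ I(p,Q) + λ (b - ∑ aₙ pₙ)`, hence convex on `[0, ∞)`. Since `I(p,Q) ≤ H(p) ≤ log N` we have
`g 0 ≤ log N`, while the point mass at a minimiser of `a` gives `λ (b - min a) ≤ g λ`. For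
`Λ' > Λ₀` this yields `g 0 < g Λ'`, and a convex function that has risen on `[0, Λ']` keeps
rising strictly beyond `Λ'`. Every value of `g` beyond `Λ'` then dominates `g Λ'`, which gives the
statement about infima. -/

open Finset

theorem Real.sum_negMulLog_le_log_card {ι : Type*} [Fintype ι] {p : ι → ℝ}
    (hp : p ∈ stdSimplex ℝ ι) : ∑ i, negMulLog (p i) ≤ log (Fintype.card ι) := by
  set K : ℝ := (Fintype.card ι : ℝ)
  have hK : 0 < K := by
    obtain ⟨i, -⟩ := nonempty_of_sum_ne_zero (hp.2.symm ▸ one_ne_zero : ∑ i, p i ≠ 0)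
    exact Nat.cast_pos.mpr (Fintype.card_pos_iff.mpr ⟨i⟩)
  have hscaled : ∑ i, negMulLog (K * p i) ≤ 0 :=
    calc ∑ i, negMulLog (K * p i) ≤ ∑ i, (1 - K * p i) :=
          sum_le_sum fun i _ => negMulLog_le_one_sub_self (mul_nonneg hK.le (hp.1 i))
      _ = 0 := by simp [sum_sub_distrib, ← mul_sum, hp.2, K]
  have hsum : ∑ i, negMulLog (K * p i) = K * (∑ i, negMulLog (p i) - log K) := by
    rw [sum_congr rfl fun i _ => negMulLog_mul K (p i), sum_add_distrib, ← sum_mul, ← mul_sum, hp.2,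
      negMulLog]
    ring
  exact sub_nonpos.mp (nonpos_of_mul_nonpos_right (hsum ▸ hscaled) hK)

theorem inf'_le_sum_mul_of_mem_stdSimplex {ι : Type*} [Fintype ι]
    (hne : (univ : Finset ι).Nonempty) (a : ι → ℝ) {p : ι → ℝ} (hp : p ∈ stdSimplex ℝ ι) :
    univ.inf' hne a ≤ ∑ i, a i * p i :=
  calc univ.inf' hne a = ∑ i, univ.inf' hne a * p i := by rw [← mul_sum, hp.2, mul_one]
    _ ≤ ∑ i, a i * p i :=
      sum_le_sum fun i _ => mul_le_mul_of_nonneg_right (inf'_le a (mem_univ i)) (hp.1 i)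

theorem sInf_image_Ici_eq_sInf_image_Icc {α β : Type*} [LinearOrder α]
    [ConditionallyCompleteLinearOrder β] {f : α → β} {x₀ x : α} (hx : x₀ ≤ x)
    (hf : ∀ y, x < y → f x ≤ f y) : sInf (f '' Set.Ici x₀) = sInf (f '' Set.Icc x₀ x) := by
  refine csInf_eq_csInf_of_forall_exists_le ?_ fun _ ⟨y, hy, hfy⟩ => ⟨_, ⟨y, hy.1, hfy⟩, le_rfl⟩
  rintro _ ⟨y, hy, rfl⟩
  rcases le_or_gt y x with hyx | hxy
  · exact ⟨_, ⟨y, ⟨hy, hyx⟩, rfl⟩, le_rfl⟩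
  · exact ⟨_, ⟨x, ⟨hx, le_rfl⟩, rfl⟩, hf y hxy⟩

section

variable {N M : ℕ}

theorem AMI_le_sum_negMulLog {Q : Fin N → Fin M → ℝ} (hQ : rowStochPos Q) {p : Fin N → ℝ}
    (hp : p ∈ stdSimplex ℝ (Fin N)) : AMI p Q ≤ ∑ n, negMulLog (p n) := by
  refine sum_le_sum fun n _ => ?_
  rcases (hp.1 n).eq_or_lt with hpn | hpn
  · simp [← hpn]
  have hlog : ∀ m, log (Q n m / ∑ l, p l * Q l m) ≤ -log (p n) := fun m => by
    have hle : p n * Q n m ≤ ∑ l, p l * Q l m :=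
      single_le_sum (fun l _ => mul_nonneg (hp.1 l) (hQ.1 l m).le) (mem_univ n)
    have hpos : 0 < p n * Q n m := mul_pos hpn (hQ.1 n m)
    rw [← log_inv]
    refine log_le_log (div_pos (hQ.1 n m) (hpos.trans_le hle)) ?_
    rw [div_le_iff₀ (hpos.trans_le hle)]
    calc Q n m = (p n)⁻¹ * (p n * Q n m) := by field_simp
      _ ≤ (p n)⁻¹ * ∑ l, p l * Q l m := by gcongr
  calc ∑ m, p n * Q n m * log (Q n m / ∑ l, p l * Q l m)
      ≤ ∑ m, p n * Q n m * -log (p n) :=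
        sum_le_sum fun m _ => mul_le_mul_of_nonneg_left (hlog m) (mul_nonneg hpn.le (hQ.1 n m).le)
    _ = negMulLog (p n) := by rw [← sum_mul, ← mul_sum, hQ.2 n, negMulLog]; ring

theorem AMI_le_log {Q : Fin N → Fin M → ℝ} (hQ : rowStochPos Q) {p : Fin N → ℝ}
    (hp : p ∈ stdSimplex ℝ (Fin N)) : AMI p Q ≤ log N := by
  simpa using (AMI_le_sum_negMulLog hQ hp).trans (Real.sum_negMulLog_le_log_card hp)

theorem AMI_single (Q : Fin N → Fin M → ℝ) (n₀ : Fin N) : AMI (Pi.single n₀ 1) Q = 0 := by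
  refine sum_eq_zero fun n _ => sum_eq_zero fun m _ => ?_
  rcases eq_or_ne n n₀ with rfl | hn
  · simp [Pi.single_apply, ite_mul]
  · simp [hn]

section DualFunction

variable [NeZero N] {Q : Fin N → Fin M → ℝ} (hQ : rowStochPos Q) (a : Fin N → ℝ) (b : ℝ)

include hQ in
theorem lagrangian_le_gfun {lam : ℝ} (hlam : 0 ≤ lam) {p : Fin N → ℝ}
    (hp : p ∈ stdSimplex ℝ (Fin N)) : AMI p Q + lam * (b - ∑ n, a n * p n) ≤ gfun Q a b lam := by
  refine le_csSup ⟨log N + lam * (b - univ.inf' univ_nonempty a), ?_⟩ ⟨p, hp, rfl⟩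
  rintro _ ⟨q, hq, rfl⟩
  have hcost := inf'_le_sum_mul_of_mem_stdSimplex univ_nonempty a hq
  have hAMI := AMI_le_log hQ hq
  nlinarith

theorem gfun_le_of_forall_le {lam B : ℝ}
    (h : ∀ p ∈ stdSimplex ℝ (Fin N), AMI p Q + lam * (b - ∑ n, a n * p n) ≤ B) :
    gfun Q a b lam ≤ B :=
  csSup_le ⟨_, _, single_mem_stdSimplex ℝ 0, rfl⟩ fun _ ⟨p, hp, hx⟩ => hx ▸ h p hp

include hQ in
theorem mul_le_gfun {lam : ℝ} (hlam : 0 ≤ lam) :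
    lam * (b - univ.inf' univ_nonempty a) ≤ gfun Q a b lam := by
  obtain ⟨n₀, -, hn₀⟩ := exists_mem_eq_inf' univ_nonempty a
  simpa [AMI_single, Pi.single_apply, hn₀] using
    lagrangian_le_gfun hQ a b hlam (single_mem_stdSimplex ℝ n₀)

include hQ in
theorem gfun_zero_le_log : gfun Q a b 0 ≤ log N :=
  gfun_le_of_forall_le a b fun _ hp => by simpa using AMI_le_log hQ hp

include hQ in
theorem convexOn_gfun : ConvexOn ℝ (Set.Ici 0) (gfun Q a b) := by
  refine ⟨convex_Ici 0, fun x hx y hy s t hs ht hst => gfun_le_of_forall_le a b fun p hp => ?_⟩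
  have hx' := lagrangian_le_gfun hQ a b hx hp
  have hy' := lagrangian_le_gfun hQ a b hy hp
  calc AMI p Q + (s • x + t • y) * (b - ∑ n, a n * p n)
      = s * (AMI p Q + x * (b - ∑ n, a n * p n)) + t * (AMI p Q + y * (b - ∑ n, a n * p n)) := by
        rw [smul_eq_mul, smul_eq_mul]; linear_combination (AMI p Q) * hst.symm
    _ ≤ s • gfun Q a b x + t • gfun Q a b y := by
        rw [smul_eq_mul, smul_eq_mul]; gcongr

include hQ in
theorem gfun_lt_gfun_of_log_lt {Λ t : ℝ} (hΛ_nonneg : 0 ≤ Λ)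
    (hΛ : log N < Λ * (b - univ.inf' univ_nonempty a)) (ht : Λ < t) :
    gfun Q a b Λ < gfun Q a b t := by
  have hΛpos : 0 < Λ := hΛ_nonneg.lt_of_ne <| by
    rintro rfl
    simpa using hΛ.trans_le' (log_natCast_nonneg N)
  have hgΛ : gfun Q a b 0 < gfun Q a b Λ :=
    (gfun_zero_le_log hQ a b).trans_lt (hΛ.trans_le (mul_le_gfun hQ a b hΛ_nonneg))
  exact (convexOn_gfun hQ a b).lt_right_of_left_lt Set.self_mem_Ici (hΛpos.trans ht).le
    (by rw [openSegment_eq_Ioo (hΛpos.trans ht)]; exact ⟨hΛpos, ht⟩) hgΛ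

end DualFunction

end

theorem dual_function_increasing_beyond_threshold_general
    {N M : ℕ} (hN : 0 < N)
    (Q : Fin N → Fin M → ℝ) (hQ : rowStochPos Q)
    (a : Fin N → ℝ) (b : ℝ)
    (hb : Finset.univ.inf' (Finset.univ_nonempty_iff.mpr (Fin.pos_iff_nonempty.mp hN)) a < b)
    (Λ₀ : ℝ)
    (hΛ₀ : Λ₀ = Real.log N /
      (b - Finset.univ.inf' (Finset.univ_nonempty_iff.mpr (Fin.pos_iff_nonempty.mp hN)) a)) :
    (∀ Λ' t : ℝ, Λ₀ < Λ' → Λ' < t → gfun Q a b Λ' < gfun Q a b t) ∧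
    ∀ Λ' : ℝ, Λ₀ < Λ' →
      sInf (gfun Q a b '' { lam | 0 ≤ lam }) = sInf (gfun Q a b '' Set.Icc 0 Λ') := by
  have : NeZero N := ⟨hN.ne'⟩
  have hc : 0 < b - univ.inf' univ_nonempty a := sub_pos.mpr hb
  have hΛ₀_nonneg : 0 ≤ Λ₀ := hΛ₀ ▸ div_nonneg (log_natCast_nonneg N) hc.le
  have increasing : ∀ Λ' t : ℝ, Λ₀ < Λ' → Λ' < t → gfun Q a b Λ' < gfun Q a b t :=
    fun Λ' t hΛ' ht => gfun_lt_gfun_of_log_lt hQ a b (hΛ₀_nonneg.trans hΛ'.le)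
      ((div_lt_iff₀ hc).mp (hΛ₀ ▸ hΛ')) ht
  exact ⟨increasing, fun Λ' hΛ' => sInf_image_Ici_eq_sInf_image_Icc (hΛ₀_nonneg.trans hΛ'.le)
    fun t ht => (increasing Λ' t hΛ' ht).le⟩

theorem dual_function_increasing_beyond_threshold
    {N M : ℕ} (hN : 0 < N) (hM : 0 < M)
    (Q : Fin N → Fin M → ℝ) (hQ : rowStochPos Q)
    (a : Fin N → ℝ) (ha : ∀ n, 0 ≤ a n) (b : ℝ)
    (hb : Finset.univ.inf' (Finset.univ_nonempty_iff.mpr (Fin.pos_iff_nonempty.mp hN)) a < b)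
    (Λ₀ : ℝ)
    (hΛ₀ : Λ₀ = Real.log N /
      (b - Finset.univ.inf' (Finset.univ_nonempty_iff.mpr (Fin.pos_iff_nonempty.mp hN)) a)) :
    (∀ Λ' t : ℝ, Λ₀ < Λ' → Λ' < t → gfun Q a b Λ' < gfun Q a b t) ∧
    ∀ Λ' : ℝ, Λ₀ < Λ' →
      sInf (gfun Q a b '' { lam | 0 ≤ lam }) = sInf (gfun Q a b '' Set.Icc 0 Λ') :=
  dual_function_increasing_beyond_threshold_general hN Q hQ a b hb Λ₀ hΛ₀
end

section
/- Let N, M ≥ 1, let Q ∈ ℝ^{N×M} be row-stochastic with strictly positive entries, let a ∈ ℝ^N with a_n ≥ 0 for all n, and let b ∈ ℝ. Assume Slater's condition: there exists p̂ ∈ Δ_N with Σ_{n=1}^N a_n p̂_n < b. Then Lagrangian strong duality holds for the average-cost-constrained capacity problem: sup { I(p,Q) : p ∈ Δ_N, Σ_{n=1}^N a_n p_n ≤ b } = inf_{λ ≥ 0} sup_{p ∈ Δ_N} [ I(p,Q) + λ(b − Σ_{n=1}^N a_n p_n) ]. -/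
open Real

section aux
variable {N M : ℕ}

lemma q_pos (Q : Fin N → Fin M → ℝ) (hQpos : ∀ n m, 0 < Q n m)
    {p : Fin N → ℝ} (hp : p ∈ stdSimplex ℝ (Fin N)) (m : Fin M) :
    0 < ∑ l, p l * Q l m := by
  obtain ⟨l, hl⟩ : ∃ l, 0 < p l := by
    by_contra h
    push_neg at h
    have h0 : ∑ l, p l = 0 :=
      Finset.sum_eq_zero (fun l _ => le_antisymm (h l) (hp.1 l))
    rw [hp.2] at h0; norm_num at h0
  exact Finset.sum_pos' (fun i _ => mul_nonneg (hp.1 i) (hQpos i m).le)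
    ⟨l, Finset.mem_univ l, mul_pos hl (hQpos l m)⟩

lemma ami_eq (Q : Fin N → Fin M → ℝ) (hQ : rowStochPos Q)
    {p : Fin N → ℝ} (hp : p ∈ stdSimplex ℝ (Fin N)) :
    AMI p Q = (∑ m, Real.negMulLog (∑ l, p l * Q l m))
      + ∑ n, p n * ∑ m, Q n m * Real.log (Q n m) := by
  have hq := fun m => q_pos Q hQ.1 hp m
  unfold AMI
  have h1 : ∀ n m, p n * Q n m * Real.log (Q n m / ∑ l, p l * Q l m)
      = p n * (Q n m * Real.log (Q n m)) - (p n * Q n m) * Real.log (∑ l, p l * Q l m) := by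
    intro n m
    rw [Real.log_div (hQ.1 n m).ne' (hq m).ne']
    ring
  simp only [h1, Finset.sum_sub_distrib]
  have h2 : ∑ n, ∑ m, p n * (Q n m * Real.log (Q n m))
      = ∑ n, p n * ∑ m, Q n m * Real.log (Q n m) := by
    simp [Finset.mul_sum]
  have h3 : ∑ n, ∑ m, (p n * Q n m) * Real.log (∑ l, p l * Q l m)
      = ∑ m, (∑ l, p l * Q l m) * Real.log (∑ l, p l * Q l m) := by
    rw [Finset.sum_comm]
    simp [Finset.sum_mul]
  have h4 : ∑ m, Real.negMulLog (∑ l, p l * Q l m)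
      = -∑ m, (∑ l, p l * Q l m) * Real.log (∑ l, p l * Q l m) := by
    simp [Real.negMulLog_eq_neg]
  rw [h2, h3, h4]
  ring

lemma ami_bdd (Q : Fin N → Fin M → ℝ) (hQ : rowStochPos Q) :
    ∃ C : ℝ, ∀ p ∈ stdSimplex ℝ (Fin N), AMI p Q ≤ C := by
  rcases Nat.eq_zero_or_pos N with hN | hN
  · subst hN
    exact ⟨0, fun p hp => by simp [AMI]⟩
  rcases Nat.eq_zero_or_pos M with hM | hM
  · subst hM
    exact ⟨0, fun p hp => by simp [AMI]⟩
  have hne : (Finset.univ ×ˢ Finset.univ : Finset (Fin N × Fin M)).Nonempty := by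
    simp [Finset.univ_nonempty_iff, Finset.nonempty_product]
    constructor <;> exact Fin.pos_iff_nonempty.mp ‹_›
  set μ := (Finset.univ ×ˢ Finset.univ : Finset (Fin N × Fin M)).inf' hne
    (fun x => Q x.1 x.2) with hμdef
  have hμpos : 0 < μ := by
    rw [hμdef, Finset.lt_inf'_iff]
    exact fun x _ => hQ.1 x.1 x.2
  refine ⟨max 0 (Real.log (1/μ)), fun p hp => ?_⟩
  set K := max 0 (Real.log (1/μ)) with hK
  have hq := fun m => q_pos Q hQ.1 hp m
  have hμq : ∀ m, μ ≤ ∑ l, p l * Q l m := by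
    intro m
    calc μ = (∑ l, p l) * μ := by rw [hp.2, one_mul]
    _ = ∑ l, p l * μ := by rw [Finset.sum_mul]
    _ ≤ ∑ l, p l * Q l m := by
        refine Finset.sum_le_sum (fun l _ => mul_le_mul_of_nonneg_left ?_ (hp.1 l))
        exact Finset.inf'_le (fun x : Fin N × Fin M => Q x.1 x.2) (Finset.mem_product.mpr ⟨Finset.mem_univ (l, m).1, Finset.mem_univ (l, m).2⟩)
  have hQ1 : ∀ n m, Q n m ≤ 1 := by
    intro n m
    calc Q n m ≤ ∑ m', Q n m' :=
      Finset.single_le_sum (fun m' _ => (hQ.1 n m').le) (Finset.mem_univ m)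
    _ = 1 := hQ.2 n
  have hterm : ∀ n m, p n * Q n m * Real.log (Q n m / ∑ l, p l * Q l m)
      ≤ p n * Q n m * K := by
    intro n m
    refine mul_le_mul_of_nonneg_left ?_ (mul_nonneg (hp.1 n) (hQ.1 n m).le)
    refine le_trans ?_ (le_max_right _ _)
    refine Real.log_le_log (div_pos (hQ.1 n m) (hq m)) ?_
    exact div_le_div₀ zero_le_one (hQ1 n m) hμpos (hμq m)
  calc AMI p Q ≤ ∑ n, ∑ m, p n * Q n m * K :=
    Finset.sum_le_sum (fun n _ => Finset.sum_le_sum (fun m _ => hterm n m))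
  _ = K := by
      have h4 : ∀ n, ∑ m, p n * Q n m * K = p n * K := by
        intro n
        have he : ∀ m, p n * Q n m * K = (p n * K) * Q n m := fun m => by ring
        simp only [he, ← Finset.mul_sum, hQ.2 n, mul_one]
      simp only [h4, ← Finset.sum_mul, hp.2, one_mul]

lemma ami_concave (Q : Fin N → Fin M → ℝ) (hQ : rowStochPos Q)
    {p1 p2 : Fin N → ℝ} (hp1 : p1 ∈ stdSimplex ℝ (Fin N)) (hp2 : p2 ∈ stdSimplex ℝ (Fin N))
    {s t : ℝ} (hs : 0 ≤ s) (ht : 0 ≤ t) (hst : s + t = 1) :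
    s * AMI p1 Q + t * AMI p2 Q ≤ AMI (fun n => s * p1 n + t * p2 n) Q := by
  have hp : (fun n => s * p1 n + t * p2 n) ∈ stdSimplex ℝ (Fin N) := by
    have h := (convex_stdSimplex ℝ (Fin N)) hp1 hp2 hs ht hst
    exact h
  rw [ami_eq Q hQ hp1, ami_eq Q hQ hp2, ami_eq Q hQ hp]
  have hlin : ∀ m, ∑ l, (s * p1 l + t * p2 l) * Q l m
      = s * (∑ l, p1 l * Q l m) + t * (∑ l, p2 l * Q l m) := by
    intro m
    rw [Finset.mul_sum, Finset.mul_sum, ← Finset.sum_add_distrib]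
    exact Finset.sum_congr rfl (fun l _ => by ring)
  have hent : ∑ m, (s * Real.negMulLog (∑ l, p1 l * Q l m)
        + t * Real.negMulLog (∑ l, p2 l * Q l m))
      ≤ ∑ m, Real.negMulLog (∑ l, (s * p1 l + t * p2 l) * Q l m) := by
    refine Finset.sum_le_sum (fun m _ => ?_)
    rw [hlin m]
    have h1 : (∑ l, p1 l * Q l m) ∈ Set.Ici (0:ℝ) :=
      Set.mem_Ici.mpr (le_of_lt (q_pos Q hQ.1 hp1 m))
    have h2 : (∑ l, p2 l * Q l m) ∈ Set.Ici (0:ℝ) :=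
      Set.mem_Ici.mpr (le_of_lt (q_pos Q hQ.1 hp2 m))
    have := Real.concaveOn_negMulLog.2 h1 h2 hs ht hst
    simpa using this
  have hlin2 : ∑ n, (s * p1 n + t * p2 n) * ∑ m, Q n m * Real.log (Q n m)
      = s * ∑ n, p1 n * ∑ m, Q n m * Real.log (Q n m)
        + t * ∑ n, p2 n * ∑ m, Q n m * Real.log (Q n m) := by
    rw [Finset.mul_sum, Finset.mul_sum, ← Finset.sum_add_distrib]
    exact Finset.sum_congr rfl (fun n _ => by ring)
  have hsum : ∑ m, (s * Real.negMulLog (∑ l, p1 l * Q l m)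
        + t * Real.negMulLog (∑ l, p2 l * Q l m))
      = s * ∑ m, Real.negMulLog (∑ l, p1 l * Q l m)
        + t * ∑ m, Real.negMulLog (∑ l, p2 l * Q l m) := by
    rw [Finset.mul_sum, Finset.mul_sum, ← Finset.sum_add_distrib]
  rw [hlin2]
  rw [hsum] at hent
  linarith

end aux

theorem avg_cost_capacity_strong_duality
    {N M : ℕ} (hN : 0 < N) (hM : 0 < M)
    (Q : Fin N → Fin M → ℝ) (hQ : rowStochPos Q)
    (a : Fin N → ℝ) (ha : ∀ n, 0 ≤ a n) (b : ℝ)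
    (hslater : ∃ p ∈ stdSimplex ℝ (Fin N), ∑ n, a n * p n < b) :
    sSup { x | ∃ p ∈ stdSimplex ℝ (Fin N), (∑ n, a n * p n ≤ b) ∧ x = AMI p Q } =
      sInf { y | ∃ lam : ℝ, 0 ≤ lam ∧ y = gfun Q a b lam } := by
  obtain ⟨phat, hphat, hphatb⟩ := hslater
  obtain ⟨C, hC⟩ := ami_bdd Q hQ
  set S := { x | ∃ p ∈ stdSimplex ℝ (Fin N), (∑ n, a n * p n ≤ b) ∧ x = AMI p Q } with hSdef
  set T := { y | ∃ lam : ℝ, 0 ≤ lam ∧ y = gfun Q a b lam } with hTdef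
  have hSne : S.Nonempty := ⟨AMI phat Q, phat, hphat, hphatb.le, rfl⟩
  have hSbdd : BddAbove S := by
    refine ⟨C, fun x hx => ?_⟩
    obtain ⟨p, hp, _, rfl⟩ := hx
    exact hC p hp
  set P := sSup S with hPdef
  -- cost is nonneg on simplex
  have hcost : ∀ p ∈ stdSimplex ℝ (Fin N), (0:ℝ) ≤ ∑ n, a n * p n := by
    intro p hp
    exact Finset.sum_nonneg (fun n _ => mul_nonneg (ha n) (hp.1 n))
  -- the gfun sets are bounded above for lam ≥ 0
  have hGbdd : ∀ lam : ℝ, 0 ≤ lam → BddAbove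
      { x | ∃ p ∈ stdSimplex ℝ (Fin N), x = AMI p Q + lam * (b - ∑ n, a n * p n) } := by
    intro lam hlam
    refine ⟨C + lam * b, fun x hx => ?_⟩
    obtain ⟨p, hp, rfl⟩ := hx
    have h1 := hC p hp
    have h2 : lam * (b - ∑ n, a n * p n) ≤ lam * b :=
      mul_le_mul_of_nonneg_left (by linarith [hcost p hp]) hlam
    linarith
  have hGne : ∀ lam : ℝ,
      Set.Nonempty { x | ∃ p ∈ stdSimplex ℝ (Fin N),
        x = AMI p Q + lam * (b - ∑ n, a n * p n) } := by
    intro lam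
    exact ⟨_, phat, hphat, rfl⟩
  -- weak duality
  have hweak : ∀ x ∈ S, ∀ y ∈ T, x ≤ y := by
    rintro x ⟨p, hp, hpb, rfl⟩ y ⟨lam, hlam, rfl⟩
    have h1 : AMI p Q ≤ AMI p Q + lam * (b - ∑ n, a n * p n) := by
      nlinarith
    refine h1.trans (le_csSup (hGbdd lam hlam) ⟨p, hp, rfl⟩)
  have hTne : T.Nonempty := ⟨gfun Q a b 0, 0, le_refl 0, rfl⟩
  have hTbdd : BddBelow T := ⟨AMI phat Q, fun y hy =>
    hweak (AMI phat Q) ⟨phat, hphat, hphatb.le, rfl⟩ y hy⟩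
  refine le_antisymm ?_ ?_
  · exact csSup_le hSne (fun x hx => le_csInf hTne (fun y hy => hweak x hx y hy))
  -- strong duality via separation
  · set A : Set (ℝ × ℝ) := { z | ∃ p ∈ stdSimplex ℝ (Fin N),
      (∑ n, a n * p n) - b ≤ z.1 ∧ z.2 ≤ AMI p Q } with hAdef
    set B : Set (ℝ × ℝ) := Set.Iio (0:ℝ) ×ˢ Set.Ioi P with hBdef
    have hBopen : IsOpen B := isOpen_Iio.prod isOpen_Ioi
    have hBconv : Convex ℝ B := (convex_Iio (0:ℝ)).prod (convex_Ioi P)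
    have hAconv : Convex ℝ A := by
      rintro z1 ⟨p1, hp1, hc1, hv1⟩ z2 ⟨p2, hp2, hc2, hv2⟩ s t hs ht hst
      refine ⟨fun n => s * p1 n + t * p2 n,
        (convex_stdSimplex ℝ (Fin N)) hp1 hp2 hs ht hst, ?_, ?_⟩
      · have he : ∑ n, a n * (s * p1 n + t * p2 n)
            = s * ∑ n, a n * p1 n + t * ∑ n, a n * p2 n := by
          rw [Finset.mul_sum, Finset.mul_sum, ← Finset.sum_add_distrib]
          exact Finset.sum_congr rfl (fun n _ => by ring)
        have : (s • z1 + t • z2).1 = s * z1.1 + t * z2.1 := rfl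
        rw [this, he]
        have hb : s * b + t * b = b := by rw [← add_mul, hst, one_mul]
        nlinarith [mul_le_mul_of_nonneg_left hc1 hs, mul_le_mul_of_nonneg_left hc2 ht, hb]
      · have hcc := ami_concave Q hQ hp1 hp2 hs ht hst
        have : (s • z1 + t • z2).2 = s * z1.2 + t * z2.2 := rfl
        rw [this]
        nlinarith [mul_le_mul_of_nonneg_left hv1 hs, mul_le_mul_of_nonneg_left hv2 ht, hcc]
    have hdisj : Disjoint B A := by
      rw [Set.disjoint_left]
      rintro z hzB ⟨p, hp, hc, hv⟩
      obtain ⟨hz1, hz2⟩ := hzB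
      have hfeas : ∑ n, a n * p n ≤ b := by
        have : z.1 < 0 := hz1
        linarith
      have hmem : AMI p Q ∈ S := ⟨p, hp, hfeas, rfl⟩
      have : AMI p Q ≤ P := le_csSup hSbdd hmem
      have : P < z.2 := hz2
      linarith
    obtain ⟨f, c, hfB, hfA⟩ := geometric_hahn_banach_open hBconv hBopen hAconv hdisj
    set μ := f (1, 0) with hμdef
    set ν := f (0, 1) with hνdef
    have hf : ∀ u t : ℝ, f (u, t) = u * μ + t * ν := by
      intro u t
      have h : (u, t) = u • ((1:ℝ), (0:ℝ)) + t • ((0:ℝ), (1:ℝ)) := by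
        simp [Prod.ext_iff]
      rw [h, map_add, map_smul, map_smul, smul_eq_mul, smul_eq_mul, hμdef, hνdef]
    have hBmem : ∀ u t : ℝ, u < 0 → P < t → u * μ + t * ν < c := by
      intro u t hu htP
      have := hfB (u, t) (by exact ⟨hu, htP⟩)
      rwa [hf] at this
    have hAineq : ∀ p ∈ stdSimplex ℝ (Fin N),
        c ≤ ((∑ n, a n * p n) - b) * μ + AMI p Q * ν := by
      intro p hp
      have := hfA ((∑ n, a n * p n) - b, AMI p Q) ⟨p, hp, le_refl _, le_refl _⟩
      rwa [hf] at this
    -- sign facts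
    have hν : ν ≤ 0 := by
      by_contra h
      push_neg at h
      set t0 := max (P + 1) ((c + μ + 1) / ν) with ht0
      have ht0P : P < t0 := lt_of_lt_of_le (by linarith) (le_max_left _ _)
      have ht0ν : c + μ + 1 ≤ t0 * ν := by
        have hle := le_max_right (P + 1) ((c + μ + 1) / ν)
        calc c + μ + 1 = ((c + μ + 1) / ν) * ν := (div_mul_cancel₀ _ (ne_of_gt h)).symm
        _ ≤ t0 * ν := mul_le_mul_of_nonneg_right hle h.le
      have := hBmem (-1) t0 (by norm_num) ht0P
      linarith
    have hμ0 : 0 ≤ μ := by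
      by_contra h
      push_neg at h
      set u0 := min (-1) ((c - ν * (P + 1) + 1) / μ) with hu0
      have hu0neg : u0 < 0 := lt_of_le_of_lt (min_le_left _ _) (by norm_num)
      have hu0μ : c - ν * (P + 1) + 1 ≤ u0 * μ := by
        have h1 : u0 ≤ (c - ν * (P + 1) + 1) / μ := min_le_right _ _
        calc c - ν * (P + 1) + 1 = ((c - ν * (P + 1) + 1) / μ) * μ :=
          (div_mul_cancel₀ _ (ne_of_lt h)).symm
        _ ≤ u0 * μ := mul_le_mul_of_nonpos_right h1 h.le
      have := hBmem u0 (P + 1) hu0neg (by linarith)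
      linarith
    have hcP : ν * P ≤ c := by
      by_contra h
      push_neg at h
      set ε := (ν * P - c) / (μ - ν + 1) with hε
      have hd : (0:ℝ) < μ - ν + 1 := by linarith
      have hεpos : 0 < ε := div_pos (by linarith) hd
      have hεe : ε * (μ - ν + 1) = ν * P - c := div_mul_cancel₀ _ hd.ne'
      have := hBmem (-ε) (P + ε) (by linarith) (by linarith)
      nlinarith
    rcases eq_or_lt_of_le hν with hν0 | hνneg
    · -- ν = 0 : contradiction with Slater
      exfalso
      have hc0 : 0 ≤ c := by rw [hν0] at hcP; linarith
      have h1 := hAineq phat hphat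
      rw [hν0] at h1
      rw [mul_zero, add_zero] at h1
      have h2 : ((∑ n, a n * phat n) - b) * μ ≤ 0 :=
        mul_nonpos_of_nonpos_of_nonneg (by linarith) hμ0
      have hμeq : μ = 0 := by
        rcases lt_or_eq_of_le hμ0 with h3 | h3
        · exfalso
          have : ((∑ n, a n * phat n) - b) * μ < 0 :=
            mul_neg_of_neg_of_pos (by linarith) h3
          linarith
        · exact h3.symm
      have := hBmem (-1) (P + 1) (by norm_num) (by linarith)
      rw [hμeq, hν0] at this
      simp at this
      linarith
    · -- ν < 0 : extract multiplier
      set lam := μ / (-ν) with hlam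
      have hlam0 : 0 ≤ lam := div_nonneg hμ0 (by linarith)
      have hlamν : lam * (-ν) = μ := div_mul_cancel₀ _ (by linarith : (-ν) ≠ 0)
      have hglam : gfun Q a b lam ≤ P := by
        refine csSup_le (hGne lam) ?_
        rintro x ⟨p, hp, rfl⟩
        have hkey := hAineq p hp
        have h7 : (-ν) * (lam * (b - ∑ n, a n * p n)) = μ * (b - ∑ n, a n * p n) := by
          rw [← mul_assoc, mul_comm (-ν) lam, hlamν]
        nlinarith [hkey, hcP, h7, hνneg]
      calc sInf T ≤ gfun Q a b lam := csInf_le hTbdd ⟨lam, hlam0, rfl⟩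
      _ ≤ P := hglam
end

section
/- Let N ≥ 1, γ > 0, δ > 0 and c ∈ ℝ^N. Then: (a) there exists a unique μ ∈ ℝ such that Σ_{n=1}^N max{ 0, exp( −1 − μ − c_n/γ ) − δ/N } = 1; and (b) with this μ, the vector p ∈ Δ_N given by p_n = max{ 0, exp( −1 − μ − c_n/γ ) − δ/N } is the unique minimizer over Δ_N of the function p ↦ γ Σ_{n=1}^N (p_n + δ/N) log(p_n + δ/N) + Σ_{n=1}^N c_n p_n. -/
open Real
set_option maxHeartbeats 1000000

lemma aux_mul_log_lt {a b : ℝ} (ha : 0 < a) (hb : 0 < b) (hab : a ≠ b) :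
    a * Real.log a + (Real.log a + 1) * (b - a) < b * Real.log b := by
  have hone : a / b ≠ 1 := by
    intro h
    exact hab (by field_simp at h; linarith)
  have h1 : Real.log (a / b) < a / b - 1 :=
    Real.log_lt_sub_one_of_pos (div_pos ha hb) hone
  have hlog : Real.log (a / b) = Real.log a - Real.log b := Real.log_div ha.ne' hb.ne'
  have h2 : b * (Real.log a - Real.log b) < b * (a / b - 1) := by
    rw [← hlog]; exact mul_lt_mul_of_pos_left h1 hb
  have h3 : b * (a / b - 1) = a - b := by field_simp
  nlinarith

lemma aux_mul_log_le {a b : ℝ} (ha : 0 < a) (hb : 0 < b) :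
    a * Real.log a + (Real.log a + 1) * (b - a) ≤ b * Real.log b := by
  rcases eq_or_ne a b with rfl | h
  · simp
  · exact (aux_mul_log_lt ha hb h).le

theorem prox_step_simplex_entropy
    {N : ℕ} (hN : 0 < N) (γ δ : ℝ) (hγ : 0 < γ) (hδ : 0 < δ)
    (c : Fin N → ℝ)
    (F : (Fin N → ℝ) → ℝ)
    (hF : F = fun p => γ * ∑ n, (p n + δ / N) * Real.log (p n + δ / N) +
      ∑ n, c n * p n) :
    (∃! μ : ℝ, ∑ n, max 0 (Real.exp (-1 - μ - c n / γ) - δ / N) = 1) ∧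
    ∀ μ : ℝ, (∑ n, max 0 (Real.exp (-1 - μ - c n / γ) - δ / N) = 1) →
      (fun n => max 0 (Real.exp (-1 - μ - c n / γ) - δ / N)) ∈ stdSimplex ℝ (Fin N) ∧
      ∀ q ∈ stdSimplex ℝ (Fin N),
        q ≠ (fun n => max 0 (Real.exp (-1 - μ - c n / γ) - δ / N)) →
        F (fun n => max 0 (Real.exp (-1 - μ - c n / γ) - δ / N)) < F q := by
  subst hF
  have hNe : Nonempty (Fin N) := Fin.pos_iff_nonempty.mp hN
  have hNR : (0:ℝ) < N := Nat.cast_pos.mpr hN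
  set d : ℝ := δ / N with hd
  have hdpos : 0 < d := div_pos hδ hNR
  set g : ℝ → ℝ := fun μ => ∑ n, max 0 (Real.exp (-1 - μ - c n / γ) - d) with hg
  have hterm_mono : ∀ (n : Fin N) {μ1 μ2 : ℝ}, μ1 ≤ μ2 →
      max 0 (Real.exp (-1 - μ2 - c n / γ) - d) ≤ max 0 (Real.exp (-1 - μ1 - c n / γ) - d) := by
    intro n μ1 μ2 h
    exact max_le_max le_rfl (sub_le_sub_right (Real.exp_le_exp.mpr (by linarith)) d)
  have hstrict : ∀ {μ1 μ2 : ℝ}, μ1 < μ2 → 0 < g μ2 → g μ2 < g μ1 := by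
    intro μ1 μ2 h hpos
    obtain ⟨n, -, hn⟩ : ∃ n ∈ Finset.univ, (0:ℝ) < max 0 (Real.exp (-1 - μ2 - c n / γ) - d) := by
      by_contra hc
      push_neg at hc
      have : g μ2 ≤ 0 := Finset.sum_nonpos (fun i hi => hc i hi)
      linarith
    apply Finset.sum_lt_sum (fun i _ => hterm_mono i h.le)
    refine ⟨n, Finset.mem_univ n, ?_⟩
    have h2 : 0 < Real.exp (-1 - μ2 - c n / γ) - d := by
      by_contra hc; push_neg at hc
      rw [max_eq_left hc] at hn; exact lt_irrefl _ hn
    have h3 : Real.exp (-1 - μ2 - c n / γ) < Real.exp (-1 - μ1 - c n / γ) :=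
      Real.exp_lt_exp.mpr (by linarith)
    calc max 0 (Real.exp (-1 - μ2 - c n / γ) - d)
        = Real.exp (-1 - μ2 - c n / γ) - d := max_eq_right h2.le
      _ < Real.exp (-1 - μ1 - c n / γ) - d := by linarith
      _ ≤ max 0 (Real.exp (-1 - μ1 - c n / γ) - d) := le_max_right _ _
  have hgcont : Continuous g := by
    apply continuous_finset_sum
    intro n _
    exact continuous_const.max ((Real.continuous_exp.comp (by continuity)).sub continuous_const)
  set M := Finset.univ.sup' Finset.univ_nonempty c with hM
  set m := Finset.univ.inf' Finset.univ_nonempty c with hm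
  set μlo : ℝ := -1 - M / γ - Real.log (d + 1) with hμlo
  set μhi : ℝ := -1 - m / γ - Real.log d with hμhi
  have hlohi : μlo ≤ μhi := by
    have h1 : m ≤ M := by
      obtain ⟨n⟩ := hNe
      exact le_trans (Finset.inf'_le _ (Finset.mem_univ n)) (Finset.le_sup' _ (Finset.mem_univ n))
    have h2 : Real.log d < Real.log (d + 1) := Real.log_lt_log hdpos (by linarith)
    have h3 : m / γ ≤ M / γ := by gcongr
    rw [hμlo, hμhi]; linarith
  have hglo : 1 ≤ g μlo := by
    have h1 : ∀ n : Fin N, (1:ℝ) ≤ max 0 (Real.exp (-1 - μlo - c n / γ) - d) := by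
      intro n
      have hc : c n ≤ M := Finset.le_sup' _ (Finset.mem_univ n)
      have hcc : c n / γ ≤ M / γ := by gcongr
      have hlg : Real.log (d + 1) ≤ -1 - μlo - c n / γ := by
        rw [hμlo]; linarith
      have he : d + 1 ≤ Real.exp (-1 - μlo - c n / γ) := by
        calc d + 1 = Real.exp (Real.log (d + 1)) := (Real.exp_log (by linarith)).symm
          _ ≤ _ := Real.exp_le_exp.mpr hlg
      calc (1:ℝ) ≤ Real.exp (-1 - μlo - c n / γ) - d := by linarith
        _ ≤ _ := le_max_right _ _
    calc (1:ℝ) ≤ (N:ℝ) := by exact_mod_cast hN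
      _ = ∑ _n : Fin N, (1:ℝ) := by simp
      _ ≤ g μlo := Finset.sum_le_sum (fun n _ => h1 n)
  have hghi : g μhi = 0 := by
    apply Finset.sum_eq_zero
    intro n _
    have hc : m ≤ c n := Finset.inf'_le _ (Finset.mem_univ n)
    have hcc : m / γ ≤ c n / γ := by gcongr
    have h1 : -1 - μhi - c n / γ ≤ Real.log d := by
      rw [hμhi]; linarith
    have h2 : Real.exp (-1 - μhi - c n / γ) ≤ d := by
      calc Real.exp (-1 - μhi - c n / γ) ≤ Real.exp (Real.log d) := Real.exp_le_exp.mpr h1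
        _ = d := Real.exp_log hdpos
    exact max_eq_left (by linarith)
  obtain ⟨μ0, -, hμ0⟩ : ∃ μ ∈ Set.Icc μlo μhi, g μ = 1 := by
    have h1 : (1:ℝ) ∈ Set.Icc (g μhi) (g μlo) := ⟨by rw [hghi]; norm_num, hglo⟩
    obtain ⟨μ, hμ, hμ'⟩ := intermediate_value_Icc' hlohi hgcont.continuousOn h1
    exact ⟨μ, hμ, hμ'⟩
  have huniq : ∀ μ' : ℝ, g μ' = 1 → μ' = μ0 := by
    intro μ' h'
    by_contra hne
    rcases lt_or_gt_of_ne hne with h | h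
    · have := hstrict h (by rw [hμ0]; norm_num)
      rw [h', hμ0] at this; exact lt_irrefl _ this
    · have := hstrict h (by rw [h']; norm_num)
      rw [h', hμ0] at this; exact lt_irrefl _ this
  constructor
  · exact ⟨μ0, hμ0, huniq⟩
  intro μ hμ
  set p : Fin N → ℝ := fun n => max 0 (Real.exp (-1 - μ - c n / γ) - d) with hp
  have hpmem : p ∈ stdSimplex ℝ (Fin N) := ⟨fun n => le_max_left _ _, hμ⟩
  refine ⟨hpmem, ?_⟩
  intro q hq hqp
  have hcoef : ∀ n : Fin N, 0 ≤ (γ * (Real.log (p n + d) + 1) + c n + γ * μ) * (q n - p n) := by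
    intro n
    rcases le_or_gt (Real.exp (-1 - μ - c n / γ)) d with h | h
    · have hp0 : p n = 0 := by simp only [hp]; exact max_eq_left (by linarith)
      have hlog : -1 - μ - c n / γ ≤ Real.log d := by
        rw [← Real.log_exp (-1 - μ - c n / γ)]
        exact Real.log_le_log (Real.exp_pos _) h
      apply mul_nonneg
      · rw [hp0, zero_add]
        have h1 : γ * (-1 - μ - c n / γ) ≤ γ * Real.log d := by
          exact mul_le_mul_of_nonneg_left hlog hγ.le
        have h2 : γ * (-1 - μ - c n / γ) = -γ - γ * μ - c n := by
          field_simp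
        linarith
      · rw [hp0, sub_zero]; exact hq.1 n
    · have hp1 : p n + d = Real.exp (-1 - μ - c n / γ) := by
        simp only [hp]; rw [max_eq_right (by linarith : (0:ℝ) ≤ Real.exp (-1 - μ - c n / γ) - d)]; ring
      rw [hp1, Real.log_exp]
      have h2 : γ * (-1 - μ - c n / γ + 1) + c n + γ * μ = 0 := by
        field_simp; ring
      rw [h2, zero_mul]
  have hppos : ∀ n, 0 < p n + d := fun n => by have := hpmem.1 n; linarith
  have hqpos : ∀ n, 0 < q n + d := fun n => by have := hq.1 n; linarith
  have key : ∀ n : Fin N,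
      γ * ((p n + d) * Real.log (p n + d)) + c n * p n + γ * μ * p n ≤
      γ * ((q n + d) * Real.log (q n + d)) + c n * q n + γ * μ * q n := by
    intro n
    have h1 := aux_mul_log_le (hppos n) (hqpos n)
    have h2 := hcoef n
    nlinarith [mul_le_mul_of_nonneg_left h1 hγ.le]
  have keystrict : ∀ n : Fin N, q n ≠ p n →
      γ * ((p n + d) * Real.log (p n + d)) + c n * p n + γ * μ * p n <
      γ * ((q n + d) * Real.log (q n + d)) + c n * q n + γ * μ * q n := by
    intro n hne
    have h1 := aux_mul_log_lt (hppos n) (hqpos n) (fun h => hne (by linarith))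
    have h2 := hcoef n
    nlinarith [mul_lt_mul_of_pos_left h1 hγ]
  obtain ⟨n0, hn0⟩ := Function.ne_iff.mp hqp
  have hsum : ∑ n, (γ * ((p n + d) * Real.log (p n + d)) + c n * p n + γ * μ * p n) <
      ∑ n, (γ * ((q n + d) * Real.log (q n + d)) + c n * q n + γ * μ * q n) :=
    Finset.sum_lt_sum (fun i _ => key i) ⟨n0, Finset.mem_univ n0, keystrict n0 hn0⟩
  have expand : ∀ r : Fin N → ℝ,
      (∑ n, (γ * ((r n + d) * Real.log (r n + d)) + c n * r n + γ * μ * r n))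
      = γ * ∑ n, (r n + d) * Real.log (r n + d) + ∑ n, c n * r n + γ * μ * ∑ n, r n := by
    intro r
    rw [Finset.sum_add_distrib, Finset.sum_add_distrib, Finset.mul_sum, Finset.mul_sum]
  rw [expand, expand, hpmem.2, hq.2] at hsum
  dsimp only
  linarith
end

section
/- Let M ≥ 1, let q ∈ Δ_M have strictly positive entries, and let ρ > 0. Define g(μ,λ) = − Σ_{m=1}^M (1+λ) exp( (λ log q_m − μ)/(1+λ) − 1 ) − λρ − μ for λ ≥ 0 and μ ∈ ℝ. Then strong duality holds for the KL-constrained entropy minimization problem: min { Σ_{m=1}^M r_m log r_m : r ∈ Δ_M, Σ_{m=1}^M r_m log( r_m / q_m ) ≤ ρ } = sup_{λ ≥ 0, μ ∈ ℝ} g(μ,λ), where the minimand uses the convention 0·log 0 = 0 and the Kullback–Leibler constraint uses the convention 0·log(0/q_m) = 0. -/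
/-!
Weak duality is the Fenchel inequality `r log r - a r ≥ -exp (a - 1)`, applied termwise to the
Lagrangian with `a = (λ log q - μ) / (1 + λ)`; equality holds exactly at `r = exp (a - 1)`.
For multipliers `λ ≥ 0` and suitable `μ` these minimisers of the Lagrangian are the tilted
distributions `q ^ β / ∑ q ^ β` with `β = λ / (1 + λ) ∈ [0, 1)`. Along this family the divergence from `q` is continuous in `β` and
vanishes at `β = 1`, so either the uniform distribution (`β = 0`) is feasible, or by the
intermediate value theorem some `β ∈ (0, 1)` makes the constraint active. In both cases
complementary slackness holds and the dual value equals the primal value at that point.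
-/

open Real Finset

theorem csInf_eq_csSup_of_forall_le_of_mem {α : Type*} [ConditionallyCompleteLattice α]
    {s t : Set α} (h : ∀ x ∈ s, ∀ y ∈ t, y ≤ x) {a : α} (has : a ∈ s) (hat : a ∈ t) :
    sInf s = sSup t :=
  (IsLeast.csInf_eq ⟨has, fun x hx => h x hx a hat⟩).trans
    (IsGreatest.csSup_eq ⟨hat, fun y hy => h a has y hy⟩).symm

namespace KLConstrainedEntropy

variable {ι : Type*} [Fintype ι]

noncomputable def negEntropy (r : ι → ℝ) : ℝ := ∑ i, r i * log (r i)

noncomputable def klDiv (r q : ι → ℝ) : ℝ := ∑ i, r i * log (r i / q i)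

noncomputable def dualFun (q : ι → ℝ) (ρ μ lam : ℝ) : ℝ :=
  -(∑ i, (1 + lam) * exp ((lam * log (q i) - μ) / (1 + lam) - 1)) - lam * ρ - μ

noncomputable def lagrangian (q : ι → ℝ) (ρ : ℝ) (r : ι → ℝ) (μ lam : ℝ) : ℝ :=
  negEntropy r + lam * (klDiv r q - ρ) + μ * (∑ i, r i - 1)

noncomputable def gibbs (v : ι → ℝ) (β : ℝ) (i : ι) : ℝ :=
  exp (β * v i) / ∑ j, exp (β * v j)

lemma neg_exp_sub_one_le_mul_log_sub_mul {r : ℝ} (hr : 0 ≤ r) (a : ℝ) :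
    -exp (a - 1) ≤ r * log r - a * r := by
  rcases hr.eq_or_lt with rfl | hr
  · simp [(exp_pos _).le]
  · have h : a - log r ≤ exp (a - 1) / r := by
      have := log_le_sub_one_of_pos (div_pos (exp_pos (a - 1)) hr)
      rw [log_div (exp_pos _).ne' hr.ne', log_exp] at this
      linarith
    have := mul_le_mul_of_nonneg_left h hr.le
    rw [mul_div_cancel₀ _ hr.ne'] at this
    linarith

lemma mul_log_div_eq_sub {r q : ℝ} (hq : q ≠ 0) : r * log (r / q) = r * log r - r * log q := by
  rcases eq_or_ne r 0 with rfl | hr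
  · simp
  · rw [log_div hr hq]; ring

lemma klDiv_self {q : ι → ℝ} (hq : ∀ i, q i ≠ 0) : klDiv q q = 0 := by
  simp [klDiv, div_self (hq _)]

lemma lagrangian_eq_sum {q : ι → ℝ} (hq : ∀ i, q i ≠ 0) (ρ : ℝ) (r : ι → ℝ) (μ : ℝ)
    {lam : ℝ} (hlam : 1 + lam ≠ 0) :
    lagrangian q ρ r μ lam = ∑ i, (1 + lam) *
      (r i * log (r i) - (lam * log (q i) - μ) / (1 + lam) * r i) - lam * ρ - μ := by
  have hsum : ∀ i, (1 + lam) * (r i * log (r i) - (lam * log (q i) - μ) / (1 + lam) * r i)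
      = r i * log (r i) + lam * (r i * log (r i / q i)) + μ * r i := by
    intro i
    rw [mul_log_div_eq_sub (hq i)]
    field_simp
    ring
  simp only [hsum, sum_add_distrib, ← mul_sum, lagrangian, negEntropy, klDiv]
  ring

lemma dualFun_le_lagrangian {q : ι → ℝ} (hq : ∀ i, q i ≠ 0) (ρ : ℝ) {r : ι → ℝ}
    (hr : ∀ i, 0 ≤ r i) (μ : ℝ) {lam : ℝ} (hlam : 0 ≤ lam) :
    dualFun q ρ μ lam ≤ lagrangian q ρ r μ lam := by
  rw [lagrangian_eq_sum hq ρ r μ (by positivity), dualFun, ← sum_neg_distrib]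
  gcongr with i
  rw [← mul_neg]
  exact mul_le_mul_of_nonneg_left (neg_exp_sub_one_le_mul_log_sub_mul (hr i) _) (by positivity)

lemma dualFun_eq_lagrangian {q : ι → ℝ} (hq : ∀ i, q i ≠ 0) (ρ : ℝ) (r : ι → ℝ) (μ : ℝ)
    {lam : ℝ} (hlam : 1 + lam ≠ 0)
    (hr : ∀ i, r i = exp ((lam * log (q i) - μ) / (1 + lam) - 1)) :
    dualFun q ρ μ lam = lagrangian q ρ r μ lam := by
  rw [lagrangian_eq_sum hq ρ r μ hlam, dualFun, ← sum_neg_distrib]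
  congr 2
  refine sum_congr rfl fun i _ => ?_
  rw [hr, log_exp]
  ring

lemma lagrangian_le_negEntropy (q : ι → ℝ) {ρ : ℝ} {r : ι → ℝ} (hr : ∑ i, r i = 1)
    (hKL : klDiv r q ≤ ρ) (μ : ℝ) {lam : ℝ} (hlam : 0 ≤ lam) :
    lagrangian q ρ r μ lam ≤ negEntropy r := by
  have : lam * (klDiv r q - ρ) ≤ 0 := mul_nonpos_of_nonneg_of_nonpos hlam (by linarith)
  simp only [lagrangian, hr, sub_self, mul_zero, add_zero]
  linarith

theorem dualFun_le_negEntropy {q : ι → ℝ} (hq : ∀ i, q i ≠ 0) {ρ : ℝ} {r : ι → ℝ}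
    (hr : r ∈ stdSimplex ℝ ι) (hKL : klDiv r q ≤ ρ) (μ : ℝ) {lam : ℝ} (hlam : 0 ≤ lam) :
    dualFun q ρ μ lam ≤ negEntropy r :=
  (dualFun_le_lagrangian hq ρ hr.1 μ hlam).trans (lagrangian_le_negEntropy q hr.2 hKL μ hlam)

lemma gibbs_one_log {q : ι → ℝ} (hq : ∑ i, q i = 1) (hqpos : ∀ i, 0 < q i) :
    gibbs (fun i => log (q i)) 1 = q := by
  funext i
  simp only [gibbs, one_mul, exp_log (hqpos _), hq, div_one]

section Gibbs

variable [Nonempty ι]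

lemma sum_exp_pos (v : ι → ℝ) (β : ℝ) : 0 < ∑ j, exp (β * v j) :=
  sum_pos (fun _ _ => exp_pos _) univ_nonempty

lemma gibbs_pos (v : ι → ℝ) (β : ℝ) (i : ι) : 0 < gibbs v β i :=
  div_pos (exp_pos _) (sum_exp_pos v β)

lemma gibbs_mem_stdSimplex (v : ι → ℝ) (β : ℝ) : gibbs v β ∈ stdSimplex ℝ ι :=
  ⟨fun i => (gibbs_pos v β i).le, by
    simp only [gibbs, ← sum_div, div_self (sum_exp_pos v β).ne']⟩

lemma gibbs_eq_exp (v : ι → ℝ) (β : ℝ) (i : ι) :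
    gibbs v β i = exp (β * v i - log (∑ j, exp (β * v j))) := by
  rw [exp_sub, exp_log (sum_exp_pos v β), gibbs]

lemma continuous_gibbs (v : ι → ℝ) (i : ι) : Continuous fun β => gibbs v β i := by
  unfold gibbs
  exact Continuous.div (by fun_prop) (by fun_prop) fun β => (sum_exp_pos v β).ne'

lemma continuous_klDiv_gibbs (v : ι → ℝ) {q : ι → ℝ} (hq : ∀ i, q i ≠ 0) :
    Continuous fun β => klDiv (gibbs v β) q := by
  unfold klDiv
  refine continuous_finsetSum _ fun i _ => (continuous_gibbs v i).mul ?_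
  exact ((continuous_gibbs v i).div_const _).log fun β => div_ne_zero (gibbs_pos v β i).ne' (hq i)

/-- For the multipliers `λ = β / (1 - β)` and `μ = (log Z - 1) / (1 - β)`, the minimiser
`exp (a - 1)` of the Lagrangian is `gibbs v β`. -/
lemma exp_dual_arg_eq_gibbs (v : ι → ℝ) {β : ℝ} (hβ : β < 1) (i : ι) :
    exp ((β / (1 - β) * v i - (log (∑ j, exp (β * v j)) - 1) / (1 - β)) /
      (1 + β / (1 - β)) - 1) = gibbs v β i := by
  have : 1 - β ≠ 0 := by linarith
  rw [gibbs_eq_exp]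
  congr 1
  field_simp
  ring

lemma dualFun_eq_negEntropy_gibbs {q : ι → ℝ} (hq : ∀ i, q i ≠ 0) (ρ : ℝ) {β : ℝ} (hβ : β < 1)
    (hslack : β * (klDiv (gibbs (fun i => log (q i)) β) q - ρ) = 0) :
    dualFun q ρ ((log (∑ j, exp (β * log (q j))) - 1) / (1 - β)) (β / (1 - β)) =
      negEntropy (gibbs (fun i => log (q i)) β) := by
  have h1 : 1 - β ≠ 0 := by linarith
  have hlam : 1 + β / (1 - β) ≠ 0 := by
    rw [one_add_div h1, sub_add_cancel]
    exact one_div_ne_zero h1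
  rw [dualFun_eq_lagrangian hq ρ (gibbs (fun i => log (q i)) β) _ hlam
    fun i => (exp_dual_arg_eq_gibbs (fun i => log (q i)) hβ i).symm]
  simp only [lagrangian, (gibbs_mem_stdSimplex _ β).2, sub_self, mul_zero, add_zero,
    div_mul_eq_mul_div, hslack, zero_div]

lemma exists_gibbs_feasible_slack {q : ι → ℝ} (hq : ∑ i, q i = 1) (hqpos : ∀ i, 0 < q i)
    {ρ : ℝ} (hρ : 0 < ρ) :
    ∃ β, 0 ≤ β ∧ β < 1 ∧ klDiv (gibbs (fun i => log (q i)) β) q ≤ ρ ∧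
      β * (klDiv (gibbs (fun i => log (q i)) β) q - ρ) = 0 := by
  by_cases h0 : klDiv (gibbs (fun i => log (q i)) 0) q ≤ ρ
  · exact ⟨0, le_rfl, one_pos, h0, zero_mul _⟩
  have hF1 : klDiv (gibbs (fun i => log (q i)) 1) q = 0 := by
    rw [gibbs_one_log hq hqpos, klDiv_self fun i => (hqpos i).ne']
  obtain ⟨β, ⟨hβ0, hβ1⟩, hFβ⟩ := intermediate_value_Icc' zero_le_one
    (continuous_klDiv_gibbs _ fun i => (hqpos i).ne').continuousOn
    ⟨hF1.trans_le hρ.le, (not_le.mp h0).le⟩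
  beta_reduce at hFβ
  refine ⟨β, hβ0, hβ1.lt_of_ne ?_, hFβ.le, by rw [hFβ, sub_self, mul_zero]⟩
  rintro rfl
  exact hρ.ne' (hFβ.symm.trans hF1)

end Gibbs

end KLConstrainedEntropy

open KLConstrainedEntropy in
theorem kl_constrained_entropy_strong_duality_general
    {M : ℕ} (q : Fin M → ℝ) (hq : q ∈ stdSimplex ℝ (Fin M))
    (hqpos : ∀ m, 0 < q m) (ρ : ℝ) (hρ : 0 < ρ)
    (g : ℝ → ℝ → ℝ)
    (hg : g = fun μ lam =>
      -(∑ m, (1 + lam) * Real.exp ((lam * Real.log (q m) - μ) / (1 + lam) - 1)) -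
        lam * ρ - μ) :
    sInf { x | ∃ r ∈ stdSimplex ℝ (Fin M),
        (∑ m, r m * Real.log (r m / q m) ≤ ρ) ∧
        x = ∑ m, r m * Real.log (r m) } =
      sSup { y | ∃ lam : ℝ, 0 ≤ lam ∧ ∃ μ : ℝ, y = g μ lam } := by
  subst hg
  have hq0 : ∀ m, q m ≠ 0 := fun m => (hqpos m).ne'
  have : Nonempty (Fin M) :=
    univ_nonempty_iff.mp (nonempty_of_sum_ne_zero (hq.2.symm ▸ one_ne_zero))
  obtain ⟨β, hβ0, hβ1, hfeas, hslack⟩ := exists_gibbs_feasible_slack hq.2 hqpos hρ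
  refine csInf_eq_csSup_of_forall_le_of_mem ?_ ⟨_, gibbs_mem_stdSimplex _ β, hfeas, rfl⟩
    ⟨_, div_nonneg hβ0 (sub_nonneg.mpr hβ1.le), _,
      (dualFun_eq_negEntropy_gibbs hq0 ρ hβ1 hslack).symm⟩
  rintro _ ⟨r, hr, hKL, rfl⟩ _ ⟨lam, hlam, μ, rfl⟩
  exact dualFun_le_negEntropy hq0 hr hKL μ hlam

theorem kl_constrained_entropy_strong_duality
    {M : ℕ} (hM : 0 < M) (q : Fin M → ℝ) (hq : q ∈ stdSimplex ℝ (Fin M))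
    (hqpos : ∀ m, 0 < q m) (ρ : ℝ) (hρ : 0 < ρ)
    (g : ℝ → ℝ → ℝ)
    (hg : g = fun μ lam =>
      -(∑ m, (1 + lam) * Real.exp ((lam * Real.log (q m) - μ) / (1 + lam) - 1)) -
        lam * ρ - μ) :
    sInf { x | ∃ r ∈ stdSimplex ℝ (Fin M),
        (∑ m, r m * Real.log (r m / q m) ≤ ρ) ∧
        x = ∑ m, r m * Real.log (r m) } =
      sSup { y | ∃ lam : ℝ, 0 ≤ lam ∧ ∃ μ : ℝ, y = g μ lam } :=
  kl_constrained_entropy_strong_duality_general q hq hqpos ρ hρ g hg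
end
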